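/- arXiv:2408.03527 — 6 statements merged into one kernel-verified Lean document; each statement's English description precedes it below -/
import Mathlib

section
/- Let a, b ∈ ℝ^m lie in the same open face of the derived arrangement δA_o, and let I, J, K be any partition of {1,…,m}. Then the polyhedra P(a,I,J,K) and P(b,I,J,K) have the same normal fan, i.e. {N_{P(a,I,J,K)}(x) : x ∈ P(a,I,J,K)} = {N_{P(b,I,J,K)}(y) : y ∈ P(b,I,J,K)} as families of subsets of ℝ^n. -/
open RealInnerProductSpace

noncomputable section

/-- `ℝ^n` with the Euclidean inner product. -/
abbrev Euc (n : ℕ) := EuclideanSpace ℝ (Fin n)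

/-- Standard scalar product on `ℝ^m` (as tuples). -/
def dotm {m : ℕ} (c a : Fin m → ℝ) : ℝ := ∑ i, c i * a i

/-- `C` is a circuit: the family `{u i : i ∈ C}` is linearly dependent but every proper
subfamily is linearly independent. -/
def IsCircuit {n m : ℕ} (u : Fin m → Euc n) (C : Set (Fin m)) : Prop :=
  ¬ LinearIndependent ℝ (fun i : C => u i) ∧
    ∀ D : Set (Fin m), D ⊂ C → LinearIndependent ℝ (fun i : D => u i)

/-- `c` is a circuit vector: `∑ i, c i • u i = 0` and the support of `c` is a circuit. -/
def IsCircuitVector {n m : ℕ} (u : Fin m → Euc n) (c : Fin m → ℝ) : Prop :=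
  (∑ i, c i • u i) = 0 ∧ IsCircuit u {i | c i ≠ 0}

/-- `a` and `b` lie in the same open face of the derived arrangement `δA_o`:
for every circuit vector `c`, `⟨c,a⟩` and `⟨c,b⟩` have the same sign. -/
def SameOpenFace {n m : ℕ} (u : Fin m → Euc n) (a b : Fin m → ℝ) : Prop :=
  ∀ c : Fin m → ℝ, IsCircuitVector u c →
    SignType.sign (dotm c a) = SignType.sign (dotm c b)

/-- `I, J, K` is a partition of `{1,…,m}` into pairwise disjoint (possibly empty) sets. -/
def IsTripartition {m : ℕ} (I J K : Set (Fin m)) : Prop :=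
  I ∪ J ∪ K = Set.univ ∧ Disjoint I J ∧ Disjoint I K ∧ Disjoint J K

/-- The convex polyhedron `P(a,I,J,K)`. -/
def poly {n m : ℕ} (u : Fin m → Euc n) (a : Fin m → ℝ) (I J K : Set (Fin m)) :
    Set (Euc n) :=
  {x | (∀ i ∈ I, ⟪u i, x⟫ = a i) ∧ (∀ j ∈ J, ⟪u j, x⟫ ≤ a j) ∧ (∀ k ∈ K, a k ≤ ⟪u k, x⟫)}

/-- The normal cone of `P` at `x`. -/
def normalCone {n : ℕ} (P : Set (Euc n)) (x : Euc n) : Set (Euc n) :=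
  {v | ∀ y ∈ P, ⟪v, y⟫ ≤ ⟪v, x⟫}

/-- The normal fan of `P`: the family of normal cones at points of `P`. -/
def normalFan {n : ℕ} (P : Set (Euc n)) : Set (Set (Euc n)) :=
  {N | ∃ x ∈ P, N = normalCone P x}

/-- A face of a convex polyhedron: the empty set or an exposed face. -/
def IsFace {n : ℕ} (P F : Set (Euc n)) : Prop :=
  F = ∅ ∨ ∃ v : Euc n, F = {x ∈ P | ∀ y ∈ P, ⟪v, y⟫ ≤ ⟪v, x⟫}

/-- The set of sign vectors of the parallel translation `A_a`. -/
def signSet {n m : ℕ} (u : Fin m → Euc n) (a : Fin m → ℝ) : Set (Fin m → SignType) :=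
  {s | ∃ x : Euc n, ∀ i, s i = SignType.sign (⟪u i, x⟫ - a i)}

/-!
The normal cone of `P(a,I,J,K)` at `x` depends only on the sign vector
`i ↦ sign (⟪u i, x⟫ - a i)`: it is the polar of the cone of feasible directions at `x`, which is
cut out by the constraints tight at `x`. So it suffices that every sign vector realized for `a` is
realized for `b`.

By a transposition theorem of Motzkin type, proved by separating an open orthant from an affine
subspace, `s` is not realized for `b` exactly when some linear relation `c` among the `u i` is a
certificate: `s i * c i ≤ 0` for all `i`, and `⟨c, b⟩ < 0`, or `⟨c, b⟩ ≤ 0` with some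
`s i * c i < 0`. Write `c` as a nonnegative combination of circuit vectors `d` conformal to `c`.
If some `⟨d, b⟩ < 0`, then `⟨d, a⟩ < 0` and `d` is a certificate for `a`. Otherwise all
`⟨d, b⟩ ≥ 0`, so `⟨c, a⟩` and `⟨c, b⟩` have the same sign and `c` itself is a certificate for `a`.
-/

section Conformal

variable {ι : Type*}

def Conforms (d c : ι → ℝ) : Prop := ∀ i, d i ≠ 0 → SignType.sign (d i) = SignType.sign (c i)

namespace Conforms

variable {d e c : ι → ℝ}

theorem refl (c : ι → ℝ) : Conforms c c := fun _ _ => rfl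

theorem ne_zero (h : Conforms d c) {i : ι} (hi : d i ≠ 0) : c i ≠ 0 := by
  rw [← sign_ne_zero, ← h i hi, sign_ne_zero]
  exact hi

theorem trans (hde : Conforms d e) (hec : Conforms e c) : Conforms d c :=
  fun i hi => (hde i hi).trans (hec i (hde.ne_zero hi))

theorem support_subset (h : Conforms d c) : Function.support d ⊆ Function.support c :=
  fun _ hi => h.ne_zero hi

theorem ncard_support_lt [Finite ι] (h : Conforms d c) {i : ι} (hci : c i ≠ 0) (hdi : d i = 0) :
    (Function.support d).ncard < (Function.support c).ncard :=
  Set.ncard_lt_ncard ⟨h.support_subset, fun hsub => hsub hci hdi⟩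

theorem mul_nonpos (h : Conforms d c) {r : ℝ} {i : ι} (hc : r * c i ≤ 0) : r * d i ≤ 0 := by
  rcases eq_or_ne (d i) 0 with hd | hd
  · simp [hd]
  rw [← sign_nonpos_iff, sign_mul, h i hd, ← sign_mul, sign_nonpos_iff]
  exact hc

end Conforms

theorem sign_add_eq_of_abs_le {x y : ℝ} (h : |y| ≤ |x|) (hxy : x + y ≠ 0) :
    SignType.sign (x + y) = SignType.sign x := by
  rcases lt_trichotomy x 0 with hx | rfl | hx
  · rw [abs_of_neg hx] at h
    rw [sign_neg hx, sign_neg (lt_of_le_of_ne (by linarith [le_abs_self y]) hxy)]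
  · simp_all
  · rw [abs_of_pos hx] at h
    rw [sign_pos hx, sign_pos (lt_of_le_of_ne (by linarith [neg_abs_le y]) hxy.symm)]

theorem exists_conforms_add_smul [Fintype ι] {c h : ι → ℝ} (hh : h ≠ 0) :
    ∃ t : ℝ, Conforms (c + t • h) c ∧ ∃ i, h i ≠ 0 ∧ c i + t * h i = 0 := by
  classical
  obtain ⟨i₀, hi₀, hmin⟩ := (Finset.univ.filter fun i => h i ≠ 0).exists_min_image
    (fun i => |c i / h i|) (by simpa [Finset.Nonempty, Function.ne_iff] using hh)
  simp only [Finset.mem_filter, Finset.mem_univ, true_and] at hi₀ hmin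
  refine ⟨-(c i₀ / h i₀), fun i hi => ?_, i₀, hi₀, by field_simp; ring⟩
  simp only [Pi.add_apply, Pi.smul_apply, smul_eq_mul] at hi ⊢
  rcases eq_or_ne (h i) 0 with h0 | h0
  · simp [h0]
  refine sign_add_eq_of_abs_le ?_ hi
  calc |-(c i₀ / h i₀) * h i| = |c i₀ / h i₀| * |h i| := by rw [abs_mul, abs_neg]
    _ ≤ |c i / h i| * |h i| := mul_le_mul_of_nonneg_right (hmin i h0) (abs_nonneg _)
    _ = |c i| := by rw [abs_div, div_mul_cancel₀ _ (abs_ne_zero.mpr h0)]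

end Conformal

theorem Fintype.not_linearIndepOn_iff {ι R M : Type*} [Fintype ι] [Ring R] [AddCommGroup M]
    [Module R M] {v : ι → M} {D : Set ι} :
    ¬ LinearIndepOn R v D ↔
      ∃ h : ι → R, Fintype.linearCombination R v h = 0 ∧ h ≠ 0 ∧ Function.support h ⊆ D := by
  classical
  have sum_toFinset : ∀ g : ι → M, (∀ i ∉ D, g i = 0) → ∑ i ∈ D.toFinset, g i = ∑ i, g i :=
    fun g hg => Finset.sum_subset (Finset.subset_univ _) fun i _ hi => hg i (by simpa using hi)
  rw [← D.coe_toFinset, not_linearIndepOn_finset_iff, D.coe_toFinset]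
  constructor
  · rintro ⟨f, hf, i, hi, hfi⟩
    refine ⟨D.indicator f, ?_, Function.ne_iff.mpr ⟨i, by simpa [Set.mem_toFinset.mp hi]⟩,
      Set.support_indicator_subset⟩
    rw [Fintype.linearCombination_apply, ← sum_toFinset _ (fun i hi => by simp [hi]), ← hf]
    exact Finset.sum_congr rfl fun i hi => by simp [Set.mem_toFinset.mp hi]
  · rintro ⟨h, hh, hh0, hhD⟩
    obtain ⟨i, hi⟩ := Function.ne_iff.mp hh0
    refine ⟨h, ?_, i, Set.mem_toFinset.mpr (hhD hi), hi⟩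
    rw [sum_toFinset _ (fun i hi => by simp [Function.notMem_support.mp (mt (@hhD i) hi)]), ← hh,
      Fintype.linearCombination_apply]

section Circuits

variable {n m : ℕ} {u : Fin m → Euc n}

theorem IsCircuitVector.linearCombination_eq_zero {d : Fin m → ℝ} (hd : IsCircuitVector u d) :
    Fintype.linearCombination ℝ u d = 0 := by
  rw [Fintype.linearCombination_apply]
  exact hd.1

theorem IsCircuitVector.ne_zero {d : Fin m → ℝ} (hd : IsCircuitVector u d) : d ≠ 0 := by
  rintro rfl
  exact hd.2.1 (by simp)

theorem exists_isCircuitVector_conforms {c : Fin m → ℝ}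
    (hc : Fintype.linearCombination ℝ u c = 0) (hc0 : c ≠ 0) :
    ∃ d, IsCircuitVector u d ∧ Conforms d c := by
  induction hk : (Function.support c).ncard using Nat.strong_induction_on generalizing c with
  | _ k ih =>
  by_cases hcirc : IsCircuit u (Function.support c)
  · exact ⟨c, ⟨by rwa [← Fintype.linearCombination_apply], hcirc⟩, .refl c⟩
  have hdep : ¬ LinearIndepOn ℝ u (Function.support c) :=
    Fintype.not_linearIndepOn_iff.mpr ⟨c, hc, hc0, subset_rfl⟩
  obtain ⟨D, hD, hDdep⟩ : ∃ D ⊂ Function.support c, ¬ LinearIndepOn ℝ u D := by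
    by_contra! h
    exact hcirc ⟨hdep, h⟩
  obtain ⟨h, hh, hh0, hhD⟩ := Fintype.not_linearIndepOn_iff.mp hDdep
  obtain ⟨t, hconf, i, hi, hct⟩ := exists_conforms_add_smul (c := c) hh0
  obtain ⟨j, hjc, hjD⟩ := Set.exists_of_ssubset hD
  have hj : (c + t • h) j = c j := by
    simp [Function.notMem_support.mp (mt (@hhD j) hjD)]
  obtain ⟨d, hd, hdc⟩ := ih _ (hk ▸ hconf.ncard_support_lt (hD.1 (hhD hi)) hct)
    (by simp [hc, hh]) (fun h0 => hjc (by rw [← hj, h0]; rfl)) rfl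
  exact ⟨d, hd, hdc.trans hconf⟩

theorem mem_hull_isCircuitVector_conforms {c : Fin m → ℝ}
    (hc : Fintype.linearCombination ℝ u c = 0) :
    c ∈ PointedCone.hull ℝ {d | IsCircuitVector u d ∧ Conforms d c} := by
  induction hk : (Function.support c).ncard using Nat.strong_induction_on generalizing c with
  | _ k ih =>
  rcases eq_or_ne c 0 with rfl | hc0
  · exact zero_mem _
  obtain ⟨d, hd, hdc⟩ := exists_isCircuitVector_conforms hc hc0
  obtain ⟨t, hconf, i, hi, hct⟩ := exists_conforms_add_smul (c := c) hd.ne_zero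
  have ht : 0 ≤ -t := by
    have hdi : SignType.sign (d i) = SignType.sign (c i) := hdc i hi
    rcases hi.lt_or_gt with hneg | hpos
    · rw [sign_neg hneg, eq_comm, sign_eq_neg_one_iff] at hdi; nlinarith
    · rw [sign_pos hpos, eq_comm, sign_eq_one_iff] at hdi; nlinarith
  have hrest := ih _ (hk ▸ hconf.ncard_support_lt (hdc.ne_zero hi) hct)
    (by simp [hc, hd.linearCombination_eq_zero]) rfl
  have hsub : {e | IsCircuitVector u e ∧ Conforms e (c + t • d)} ⊆
      {e | IsCircuitVector u e ∧ Conforms e c} := fun e he => ⟨he.1, he.2.trans hconf⟩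
  have hd' : d ∈ PointedCone.hull ℝ {e | IsCircuitVector u e ∧ Conforms e c} :=
    PointedCone.subset_hull ⟨hd, hdc⟩
  have hmem := add_mem (Submodule.span_mono hsub hrest) (PointedCone.smul_mem _ ht hd')
  rwa [neg_smul, add_neg_cancel_right] at hmem

end Circuits

section Certificates

variable {ι : Type*} [Fintype ι]

def IsSignCertificate (s : ι → SignType) (b c : ι → ℝ) : Prop :=
  (∀ i, (s i : ℝ) * c i ≤ 0) ∧ (c ⬝ᵥ b < 0 ∨ c ⬝ᵥ b ≤ 0 ∧ ∃ i, (s i : ℝ) * c i < 0)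

theorem IsSignCertificate.sign_sub_ne {s : ι → SignType} {b c w : ι → ℝ}
    (hc : IsSignCertificate s b c) (hcw : c ⬝ᵥ w = 0) :
    (fun i => SignType.sign (w i - b i)) ≠ s := by
  rintro rfl
  have hterm : ∀ i, c i * (w i - b i) = |w i - b i| * (SignType.sign (w i - b i) * c i) := by
    intro i
    conv_lhs => rw [← sign_mul_abs (w i - b i)]
    ring
  have hsum : ∑ i, c i * (w i - b i) = -(c ⬝ᵥ b) := by
    simp only [mul_sub, Finset.sum_sub_distrib]
    rw [← dotProduct, ← dotProduct, hcw, zero_sub]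
  have hnonpos : ∀ i, c i * (w i - b i) ≤ 0 := fun i => by
    rw [hterm]; exact mul_nonpos_of_nonneg_of_nonpos (abs_nonneg _) (hc.1 i)
  rcases hc.2 with hneg | ⟨hle, i, hi⟩
  · linarith [Finset.sum_nonpos fun i (_ : i ∈ Finset.univ) => hnonpos i]
  · have hwi : w i - b i ≠ 0 := fun h0 => by simp [h0] at hi
    have hlt : c i * (w i - b i) < 0 := by
      rw [hterm]; exact mul_neg_of_pos_of_neg (abs_pos.mpr hwi) hi
    linarith [Finset.sum_neg' (fun i (_ : i ∈ Finset.univ) => hnonpos i)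
      ⟨i, Finset.mem_univ i, hlt⟩]

theorem dotProduct_nonneg_and_eq_zero_iff_of_mem_hull {S : Set (ι → ℝ)} {a b : ι → ℝ}
    (hS : ∀ d ∈ S, 0 ≤ d ⬝ᵥ a ∧ 0 ≤ d ⬝ᵥ b ∧ (d ⬝ᵥ a = 0 ↔ d ⬝ᵥ b = 0)) {c : ι → ℝ}
    (hc : c ∈ PointedCone.hull ℝ S) : 0 ≤ c ⬝ᵥ a ∧ 0 ≤ c ⬝ᵥ b ∧ (c ⬝ᵥ a = 0 ↔ c ⬝ᵥ b = 0) := by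
  induction hc using Submodule.span_induction with
  | mem d hd => exact hS d hd
  | zero => simp
  | add x y _ _ hx hy =>
    simp only [add_dotProduct]
    refine ⟨add_nonneg hx.1 hy.1, add_nonneg hx.2.1 hy.2.1, ?_⟩
    rw [add_eq_zero_iff_of_nonneg hx.1 hy.1, add_eq_zero_iff_of_nonneg hx.2.1 hy.2.1, hx.2.2,
      hy.2.2]
  | smul r x _ hx =>
    obtain ⟨r, hr⟩ := r
    simp only [Nonneg.mk_smul, smul_dotProduct, smul_eq_mul, mul_eq_zero]
    exact ⟨mul_nonneg hr hx.1, mul_nonneg hr hx.2.1, or_congr_right hx.2.2⟩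

end Certificates

section Separation

theorem eq_zero_of_forall_le_add_mul {r α β : ℝ} (h : ∀ t, r ≤ α + t * β) : β = 0 := by
  by_contra hβ
  have := h ((r - α - 1) / β)
  rw [div_mul_cancel₀ _ hβ] at this
  linarith

theorem nonpos_of_forall_add_mul_lt {α β γ : ℝ} (h : ∀ t > 0, α + t * β < γ) : β ≤ 0 := by
  by_contra! hβ
  have := h ((|γ - α| + 1) / β) (by positivity)
  rw [div_mul_cancel₀ _ hβ.ne'] at this
  linarith [le_abs_self (γ - α)]

theorem nonneg_of_forall_mul_lt {β γ : ℝ} (h : ∀ t > 0, t * β < γ) : 0 ≤ γ := by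
  by_contra! hγ
  have hβ : β < 0 := by simpa using (h 1 one_pos).trans hγ
  have := h (γ / β) (div_pos_of_neg_of_neg hγ hβ)
  rw [div_mul_cancel₀ _ hβ.ne] at this
  exact lt_irrefl _ this

variable {E : Type*} [NormedAddCommGroup E] [InnerProductSpace ℝ E]

theorem exists_mem_orthogonal_inner_lt_of_disjoint [CompleteSpace E] {K : Set E}
    (hKo : IsOpen K) (hKc : Convex ℝ K) {p : E} {V : Submodule ℝ E}
    (hdisj : Disjoint K (AffineSubspace.mk' p V)) : ∃ g ∈ Vᗮ, ∀ z ∈ K, ⟪g, z⟫ < ⟪g, p⟫ := by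
  obtain ⟨f, r, hfK, hfA⟩ := geometric_hahn_banach_open hKc hKo (AffineSubspace.convex _) hdisj
  have hfp : r ≤ f p := hfA p (AffineSubspace.self_mem_mk' p V)
  refine ⟨(InnerProductSpace.toDual ℝ E).symm f,
    (Submodule.mem_orthogonal' _ _).mpr fun v hv => ?_, fun z hz => ?_⟩
  · rw [InnerProductSpace.toDual_symm_apply]
    refine eq_zero_of_forall_le_add_mul (r := r) (α := f p) fun t => ?_
    simpa using hfA (p + t • v) (by simpa [AffineSubspace.mem_mk'] using V.smul_mem t hv)
  · rw [InnerProductSpace.toDual_symm_apply, InnerProductSpace.toDual_symm_apply]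
    exact (hfK z hz).trans_le hfp

theorem Submodule.exists_mem_orthogonal_inner_neg (K : Submodule ℝ E) [K.HasOrthogonalProjection]
    {x : E} (hx : x ∉ K) : ∃ c ∈ Kᗮ, ⟪c, x⟫ < 0 := by
  rw [← K.orthogonal_orthogonal] at hx
  simp only [Submodule.mem_orthogonal, not_forall] at hx
  obtain ⟨c, hc, hcx⟩ := hx
  rcases lt_or_gt_of_ne hcx with h | h
  · exact ⟨c, hc, h⟩
  · exact ⟨-c, neg_mem hc, by rw [inner_neg_left]; linarith⟩

theorem Submodule.orthogonal_inf [FiniteDimensional ℝ E] (K L : Submodule ℝ E) :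
    (K ⊓ L)ᗮ = Kᗮ ⊔ Lᗮ := by
  rw [← K.orthogonal_orthogonal, ← L.orthogonal_orthogonal, Submodule.inf_orthogonal]
  simp only [Submodule.orthogonal_orthogonal]

end Separation

namespace EuclideanSpace

variable {ι : Type*}

def supportedOn (S : Set ι) : Submodule ℝ (EuclideanSpace ℝ ι) where
  carrier := {z | ∀ i ∉ S, z i = 0}
  add_mem' hx hy i hi := by simp [hx i hi, hy i hi]
  zero_mem' _ _ := rfl
  smul_mem' r _ hx i hi := by simp [hx i hi]

theorem mem_supportedOn {S : Set ι} {z : EuclideanSpace ℝ ι} :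
    z ∈ supportedOn S ↔ ∀ i ∉ S, z i = 0 := Iff.rfl

def openSignCone (s : ι → SignType) : Set (EuclideanSpace ℝ ι) :=
  {z | ∀ i, s i ≠ 0 → 0 < s i * z i}

theorem smul_mem_openSignCone {s : ι → SignType} {z : EuclideanSpace ℝ ι}
    (hz : z ∈ openSignCone s) {t : ℝ} (ht : 0 < t) : t • z ∈ openSignCone s := fun i hi => by
  simpa [mul_left_comm] using mul_pos ht (hz i hi)

theorem toLp_add_mem_openSignCone {s : ι → SignType} {v : EuclideanSpace ℝ ι}
    (hv : ∀ i, 0 ≤ s i * v i) : WithLp.toLp 2 (fun i => (s i : ℝ)) + v ∈ openSignCone s :=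
  fun i hi => by
    have : (s i : ℝ) * s i = 1 := by cases h : s i <;> simp_all
    simp only [PiLp.add_apply, mul_add, this]
    linarith [hv i]

theorem convex_openSignCone (s : ι → SignType) : Convex ℝ (openSignCone s) := by
  simp only [openSignCone, Set.ofPred_forall]
  exact convex_iInter fun i => convex_iInter fun _ =>
    convex_halfSpace_gt ⟨fun x y => by simp [mul_add], fun r x => by simp only [PiLp.smul_apply, smul_eq_mul]; ring⟩ 0

variable [Fintype ι]

theorem orthogonal_supportedOn (S : Set ι) : (supportedOn S)ᗮ = supportedOn Sᶜ := by
  classical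
  ext c
  simp only [Submodule.mem_orthogonal, mem_supportedOn, Set.mem_compl_iff, not_not]
  constructor
  · intro h i hi
    have hsingle : single i (1 : ℝ) ∈ supportedOn S := fun j hj => by
      simp [show j ≠ i by rintro rfl; exact hj hi]
    simpa [inner_single_left] using h _ hsingle
  · intro hc z hz
    refine Finset.sum_eq_zero fun i _ => ?_
    by_cases hi : i ∈ S
    · simp [hc i hi]
    · simp [hz i hi]

theorem isOpen_openSignCone (s : ι → SignType) : IsOpen (openSignCone s) := by
  simp only [openSignCone, Set.ofPred_forall]
  exact isOpen_iInter_of_finite fun i => isOpen_iInter_of_finite fun _ =>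
    isOpen_lt continuous_const (by fun_prop)

end EuclideanSpace

section Motzkin

open EuclideanSpace

variable {ι : Type*} [Fintype ι]

theorem sign_eq_of_mul_pos {s : SignType} {x : ℝ} (hs : s ≠ 0) (h : 0 < s * x) :
    SignType.sign x = s := by
  cases s
  · exact absurd rfl hs
  · exact sign_neg (by simpa using h)
  · exact sign_pos (by simpa using h)

theorem IsSignCertificate.of_inner_lt_on_openSignCone {s : ι → SignType} {b c : ι → ℝ}
    {g : EuclideanSpace ℝ ι} {γ : ℝ} (hg : ∀ z ∈ openSignCone s, ⟪g, z⟫ < γ)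
    (hcg : ∀ i, (s i : ℝ) * c i = s i * g i) (hcb : c ⬝ᵥ b = -γ) : IsSignCertificate s b c := by
  classical
  set σ : EuclideanSpace ℝ ι := WithLp.toLp 2 fun i => (s i : ℝ)
  have hσ : σ ∈ openSignCone s := by
    simpa using toLp_add_mem_openSignCone (s := s) (v := 0) (by simp)
  have hgσ : ⟪g, σ⟫ = ∑ i, (s i : ℝ) * g i := by simp [σ, PiLp.inner_apply]
  have hsign : ∀ i, (s i : ℝ) * g i ≤ 0 := fun i =>
    nonpos_of_forall_add_mul_lt (α := ⟪g, σ⟫) (γ := γ) fun t ht => by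
      have hmem : σ + t • single i (s i : ℝ) ∈ openSignCone s :=
        toLp_add_mem_openSignCone fun j => by
          by_cases hj : j = i
          · subst hj
            simp only [PiLp.smul_apply, PiLp.single_eq_same, smul_eq_mul]
            nlinarith [sq_nonneg ((s j : ℝ))]
          · simp [hj]
      simpa [inner_add_right, inner_smul_right, inner_single_right, hgσ, mul_comm] using hg _ hmem
  have hγ : 0 ≤ γ := nonneg_of_forall_mul_lt (β := ⟪g, σ⟫) fun t ht => by
    simpa [inner_smul_right] using hg _ (smul_mem_openSignCone hσ ht)
  refine ⟨fun i => hcg i ▸ hsign i, ?_⟩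
  rw [hcb]
  rcases hγ.lt_or_eq with hγ | rfl
  · exact Or.inl (neg_neg_of_pos hγ)
  refine Or.inr ⟨by simp, ?_⟩
  by_contra! h
  have := hg σ hσ
  rw [hgσ] at this
  linarith [Finset.sum_nonneg fun i (_ : i ∈ Finset.univ) => hcg i ▸ h i]

theorem dotProduct_eq_inner (c : EuclideanSpace ℝ ι) (b : ι → ℝ) :
    ⇑c ⬝ᵥ b = ⟪c, WithLp.toLp 2 b⟫ := by
  simp [PiLp.inner_apply, dotProduct, mul_comm]

theorem disjoint_openSignCone_of_forall_sign_ne {W : Submodule ℝ (EuclideanSpace ℝ ι)}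
    {b : ι → ℝ} {s : ι → SignType} (h : ∀ w ∈ W, (fun i => SignType.sign (w i - b i)) ≠ s)
    {w₀ e₀ : EuclideanSpace ℝ ι} (hw₀ : w₀ ∈ W) (he₀ : e₀ ∈ supportedOn {i | s i ≠ 0})
    (hwe : w₀ + e₀ = WithLp.toLp 2 b) :
    Disjoint (openSignCone s) (AffineSubspace.mk' (-e₀) (W ⊓ supportedOn {i | s i ≠ 0})) := by
  refine Set.disjoint_left.mpr fun z hz hzA => ?_
  rw [SetLike.mem_coe, AffineSubspace.mem_mk', vsub_eq_sub, sub_neg_eq_add] at hzA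
  refine h (w₀ + (z + e₀)) (W.add_mem hw₀ hzA.1) (funext fun i => ?_)
  have hbi : b i = w₀ i + e₀ i := by simpa using (congrArg (· i) hwe).symm
  have hzi : (w₀ + (z + e₀)) i - b i = z i := by simp [hbi]
  rw [hzi]
  by_cases hi : s i = 0
  · have : z i = 0 := by simpa using (sub_mem hzA.2 he₀) i (by simpa using hi)
    simp [this, hi]
  · exact sign_eq_of_mul_pos hi (hz i hi)

theorem exists_isSignCertificate_of_forall_sign_ne (W : Submodule ℝ (EuclideanSpace ℝ ι))
    (b : ι → ℝ) (s : ι → SignType) (h : ∀ w ∈ W, (fun i => SignType.sign (w i - b i)) ≠ s) :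
    ∃ c ∈ Wᗮ, IsSignCertificate s b c := by
  -- If `b ∉ W ⊔ E`, a vector orthogonal to `W ⊔ E` is a certificate. Otherwise `(W - b) ∩ E`
  -- is the affine subspace `-e₀ + W ⊓ E`, which misses `openSignCone s` since
  -- `openSignCone s ∩ E = {z | sign z = s}`; a hyperplane separating them gives the certificate.
  set E := supportedOn {i | s i ≠ 0}
  have hE : Eᗮ = supportedOn {i | s i = 0} := by
    rw [orthogonal_supportedOn]; congr 1; ext; simp
  by_cases hb : WithLp.toLp 2 b ∈ W ⊔ E
  · obtain ⟨w₀, hw₀, e₀, he₀, hwe⟩ := Submodule.mem_sup.mp hb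
    obtain ⟨g, hg, hgK⟩ := exists_mem_orthogonal_inner_lt_of_disjoint (isOpen_openSignCone s)
      (convex_openSignCone s) (disjoint_openSignCone_of_forall_sign_ne h hw₀ he₀ hwe)
    rw [Submodule.orthogonal_inf, hE] at hg
    obtain ⟨c, hc, e', he', rfl⟩ := Submodule.mem_sup.mp hg
    have hcoord : ∀ i, (s i : ℝ) * (c + e') i = s i * c i := fun i => by
      by_cases hi : s i = 0
      · simp [hi]
      · simp [he' i (by simpa using hi)]
    have hcb : ⇑c ⬝ᵥ b = -⟪c + e', -e₀⟫ := by
      have hcw : ⟪c, w₀⟫ = 0 := (Submodule.mem_orthogonal' W c).mp hc w₀ hw₀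
      have hee : ⟪e', e₀⟫ = 0 := ((Submodule.mem_orthogonal' _ _).mp (hE ▸ he' :)) e₀ he₀
      rw [dotProduct_eq_inner, ← hwe, inner_add_right, hcw, inner_add_left, inner_neg_right,
        inner_neg_right, hee]
      ring
    exact ⟨c, hc, .of_inner_lt_on_openSignCone hgK (fun i => (hcoord i).symm) hcb⟩
  · obtain ⟨c, hc, hcb⟩ := (W ⊔ E).exists_mem_orthogonal_inner_neg hb
    rw [← Submodule.inf_orthogonal, hE] at hc
    refine ⟨c, hc.1, fun i => ?_, Or.inl (by rwa [dotProduct_eq_inner])⟩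
    by_cases hi : s i = 0
    · simp [hi]
    · simp [hc.2 i (by simpa using hi)]

theorem exists_sign_sub_eq_iff_not_exists_isSignCertificate
    (W : Submodule ℝ (EuclideanSpace ℝ ι)) (b : ι → ℝ) (s : ι → SignType) :
    (∃ w ∈ W, (fun i => SignType.sign (w i - b i)) = s) ↔
      ¬ ∃ c ∈ Wᗮ, IsSignCertificate s b c := by
  constructor
  · rintro ⟨w, hw, hws⟩ ⟨c, hc, hcert⟩
    refine hcert.sign_sub_ne ?_ hws
    rw [dotProduct_eq_inner]
    exact (Submodule.mem_orthogonal' W c).mp hc w hw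
  · intro h
    by_contra! h'
    exact h (exists_isSignCertificate_of_forall_sign_ne W b s h')

end Motzkin

section SignVectors

variable {n m : ℕ} {u : Fin m → Euc n}

def innerMap (u : Fin m → Euc n) : Euc n →ₗ[ℝ] Euc m where
  toFun x := WithLp.toLp 2 fun i => ⟪u i, x⟫
  map_add' x y := by ext i; simp [inner_add_right]
  map_smul' r x := by ext i; simp [inner_smul_right]

theorem mem_orthogonal_range_innerMap {c : Euc m} :
    c ∈ (LinearMap.range (innerMap u))ᗮ ↔ Fintype.linearCombination ℝ u c = 0 := by
  have key : ∀ x, ⟪innerMap u x, c⟫ = ⟪Fintype.linearCombination ℝ u c, x⟫ := fun x => by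
    simp [innerMap, PiLp.inner_apply, Fintype.linearCombination_apply, sum_inner,
      inner_smul_left]
  simp only [Submodule.mem_orthogonal, LinearMap.mem_range, forall_exists_index,
    forall_apply_eq_imp_iff, key]
  exact ⟨fun h => inner_self_eq_zero.mp (h _), fun h x => by rw [h, inner_zero_left]⟩

theorem mem_signSet_iff {a : Fin m → ℝ} {s : Fin m → SignType} :
    s ∈ signSet u a ↔
      ∃ w ∈ LinearMap.range (innerMap u), (fun i => SignType.sign (w i - a i)) = s := by
  simp only [signSet, Set.mem_ofPred_eq, LinearMap.mem_range, exists_exists_eq_and, funext_iff,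
    eq_comm (a := s _)]
  rfl

theorem SameOpenFace.symm {a b : Fin m → ℝ} (h : SameOpenFace u a b) : SameOpenFace u b a :=
  fun c hc => (h c hc).symm

theorem IsSignCertificate.exists_of_sameOpenFace {a b : Fin m → ℝ} (hab : SameOpenFace u a b)
    {s : Fin m → SignType} {c : Fin m → ℝ} (hc : Fintype.linearCombination ℝ u c = 0)
    (hcert : IsSignCertificate s b c) :
    ∃ c', Fintype.linearCombination ℝ u c' = 0 ∧ IsSignCertificate s a c' := by
  by_cases hneg : ∃ d, IsCircuitVector u d ∧ Conforms d c ∧ d ⬝ᵥ b < 0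
  · obtain ⟨d, hd, hdc, hdb⟩ := hneg
    have hda : d ⬝ᵥ a < 0 := by
      rw [← sign_eq_neg_one_iff]; rw [← sign_eq_neg_one_iff] at hdb; exact (hab d hd).trans hdb
    exact ⟨d, hd.linearCombination_eq_zero, fun i => hdc.mul_nonpos (hcert.1 i), Or.inl hda⟩
  simp only [not_exists, not_and, not_lt] at hneg
  obtain ⟨-, hcb, hiff⟩ := dotProduct_nonneg_and_eq_zero_iff_of_mem_hull (fun d hd => by
    have hdb := hneg d hd.1 hd.2
    have hsign : SignType.sign (d ⬝ᵥ a) = SignType.sign (d ⬝ᵥ b) := hab d hd.1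
    refine ⟨?_, hdb, ?_⟩
    · rw [← sign_nonneg_iff, hsign, sign_nonneg_iff]; exact hdb
    · rw [← sign_eq_zero_iff, hsign, sign_eq_zero_iff]) (mem_hull_isCircuitVector_conforms hc)
  refine ⟨c, hc, hcert.1, Or.inr ?_⟩
  rcases hcert.2 with hlt | ⟨hle, hex⟩
  · exact absurd hlt (not_lt.mpr hcb)
  · exact ⟨(hiff.mpr (le_antisymm hle hcb)).le, hex⟩

theorem signSet_subset_of_sameOpenFace {a b : Fin m → ℝ} (hab : SameOpenFace u a b) :
    signSet u a ⊆ signSet u b := by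
  intro s hs
  rw [mem_signSet_iff, exists_sign_sub_eq_iff_not_exists_isSignCertificate] at hs ⊢
  rintro ⟨c, hc, hcert⟩
  obtain ⟨c', hc', hcert'⟩ :=
    hcert.exists_of_sameOpenFace hab (mem_orthogonal_range_innerMap.mp hc)
  exact hs ⟨WithLp.toLp 2 c', mem_orthogonal_range_innerMap.mpr hc', hcert'⟩

end SignVectors

section NormalCones

open Filter Topology

variable {n m : ℕ} {u : Fin m → Euc n} {a b : Fin m → ℝ} {I J K : Set (Fin m)} {x y : Euc n}

theorem mem_poly_iff_sign :
    x ∈ poly u a I J K ↔ (∀ i ∈ I, SignType.sign (⟪u i, x⟫ - a i) = 0) ∧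
      (∀ j ∈ J, SignType.sign (⟪u j, x⟫ - a j) ≤ 0) ∧
      (∀ k ∈ K, 0 ≤ SignType.sign (⟪u k, x⟫ - a k)) := by
  simp only [poly, Set.mem_ofPred_eq, sign_eq_zero_iff, sign_nonpos_iff, sign_nonneg_iff,
    sub_eq_zero, sub_nonpos, sub_nonneg]

theorem mem_poly_of_sign_eq (hx : x ∈ poly u a I J K)
    (hxy : ∀ i, SignType.sign (⟪u i, x⟫ - a i) = SignType.sign (⟪u i, y⟫ - b i)) :
    y ∈ poly u b I J K := by
  rw [mem_poly_iff_sign] at hx ⊢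
  simpa only [hxy] using hx

theorem eventually_add_mul_nonpos {p q : ℝ} (hp : p ≤ 0) (hq : p = 0 → q ≤ 0) :
    ∀ᶠ t in 𝓝[>] (0 : ℝ), p + t * q ≤ 0 := by
  rcases hp.lt_or_eq with hp | rfl
  · have hlim : Tendsto (fun t : ℝ => p + t * q) (𝓝 0) (𝓝 p) :=
      (continuous_const.add (continuous_id.mul continuous_const)).tendsto' 0 p (by simp)
    exact nhdsWithin_le_nhds ((hlim.eventually (gt_mem_nhds hp)).mono fun _ h => h.le)
  · filter_upwards [self_mem_nhdsWithin] with t ht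
    simpa using mul_nonpos_of_nonneg_of_nonpos (le_of_lt ht) (hq rfl)

theorem eventually_mem_poly (hx : x ∈ poly u a I J K) (hy : y ∈ poly u b I J K)
    (hxy : ∀ i, SignType.sign (⟪u i, x⟫ - a i) = SignType.sign (⟪u i, y⟫ - b i))
    {z : Euc n} (hz : z ∈ poly u b I J K) :
    ∀ᶠ t in 𝓝[>] (0 : ℝ), x + t • (z - y) ∈ poly u a I J K := by
  have hlin : ∀ i t, ⟪u i, x + t • (z - y)⟫ - a i =
      (⟪u i, x⟫ - a i) + t * ((⟪u i, z⟫ - b i) - (⟪u i, y⟫ - b i)) := fun i t => by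
    simp only [inner_add_right, inner_smul_right, inner_sub_right]; ring
  have htight : ∀ i, ⟪u i, x⟫ - a i = 0 → ⟪u i, y⟫ - b i = 0 := fun i h => by
    rw [← sign_eq_zero_iff, ← hxy i, sign_eq_zero_iff, h]
  have hJ : ∀ j ∈ J, ∀ᶠ t in 𝓝[>] (0 : ℝ), ⟪u j, x + t • (z - y)⟫ ≤ a j := fun j hj => by
    refine (eventually_add_mul_nonpos (q := (⟪u j, z⟫ - b j) - (⟪u j, y⟫ - b j))
      (sub_nonpos.mpr (hx.2.1 j hj)) fun h => ?_).mono fun t ht => by linarith [hlin j t]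
    rw [htight j h, sub_zero, sub_nonpos]; exact hz.2.1 j hj
  have hK : ∀ k ∈ K, ∀ᶠ t in 𝓝[>] (0 : ℝ), a k ≤ ⟪u k, x + t • (z - y)⟫ := fun k hk => by
    refine (eventually_add_mul_nonpos (q := -((⟪u k, z⟫ - b k) - (⟪u k, y⟫ - b k)))
      (neg_nonpos.mpr (sub_nonneg.mpr (hx.2.2 k hk))) fun h => ?_).mono
      fun t ht => by linarith [hlin k t]
    rw [htight k (neg_eq_zero.mp h), sub_zero, neg_nonpos, sub_nonneg]; exact hz.2.2 k hk
  filter_upwards [(eventually_all_finite J.toFinite).mpr hJ,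
    (eventually_all_finite K.toFinite).mpr hK] with t htJ htK
  refine ⟨fun i hi => ?_, htJ, htK⟩
  have := hlin i t
  rw [hx.1 i hi, hy.1 i hi, hz.1 i hi] at this
  linarith

theorem normalCone_subset_of_sign_eq (hx : x ∈ poly u a I J K) (hy : y ∈ poly u b I J K)
    (hxy : ∀ i, SignType.sign (⟪u i, x⟫ - a i) = SignType.sign (⟪u i, y⟫ - b i)) :
    normalCone (poly u a I J K) x ⊆ normalCone (poly u b I J K) y := by
  intro v hv z hz
  obtain ⟨t, ht, htpos⟩ := ((eventually_mem_poly hx hy hxy hz).and self_mem_nhdsWithin).exists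
  have := hv _ ht
  rw [inner_add_right, inner_smul_right, inner_sub_right] at this
  nlinarith [show (0 : ℝ) < t from htpos]

theorem normalCone_eq_of_sign_eq (hx : x ∈ poly u a I J K) (hy : y ∈ poly u b I J K)
    (hxy : ∀ i, SignType.sign (⟪u i, x⟫ - a i) = SignType.sign (⟪u i, y⟫ - b i)) :
    normalCone (poly u a I J K) x = normalCone (poly u b I J K) y :=
  (normalCone_subset_of_sign_eq hx hy hxy).antisymm
    (normalCone_subset_of_sign_eq hy hx fun i => (hxy i).symm)

end NormalCones

theorem normal_fan_eq_of_sameOpenFace_general {n m : ℕ}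
    (u : Fin m → Euc n)
    (a b : Fin m → ℝ) (hab : SameOpenFace u a b)
    (I J K : Set (Fin m)) :
    normalFan (poly u a I J K) = normalFan (poly u b I J K) := by
  suffices h : ∀ a b, SameOpenFace u a b → normalFan (poly u a I J K) ⊆ normalFan (poly u b I J K)
    from (h a b hab).antisymm (h b a hab.symm)
  rintro a b hab _ ⟨x, hx, rfl⟩
  obtain ⟨y, hy⟩ := signSet_subset_of_sameOpenFace hab
    (show (fun i => SignType.sign (⟪u i, x⟫ - a i)) ∈ signSet u a from ⟨x, fun _ => rfl⟩)
  have hyP := mem_poly_of_sign_eq hx hy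
  exact ⟨y, hyP, normalCone_eq_of_sign_eq hx hyP hy⟩

theorem normal_fan_eq_of_sameOpenFace {n m : ℕ} (hn : 1 ≤ n) (hm : 1 ≤ m)
    (u : Fin m → Euc n) (hu : ∀ i, u i ≠ 0)
    (a b : Fin m → ℝ) (hab : SameOpenFace u a b)
    (I J K : Set (Fin m)) (hIJK : IsTripartition I J K) :
    normalFan (poly u a I J K) = normalFan (poly u b I J K) :=
  normal_fan_eq_of_sameOpenFace_general u a b hab I J K
end
end

section
/- Suppose the relatively open polyhedron P̊(a,I,J,K) is nonempty and a, b lie in the same open face of the derived arrangement δA_o. Then P̊(b,I,J,K) is nonempty. -/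
open RealInnerProductSpace

noncomputable section

/-- The relatively open polyhedron `P̊(a,I,J,K)`. -/
def polyOpen {n m : ℕ} (u : Fin m → Euc n) (a : Fin m → ℝ) (I J K : Set (Fin m)) :
    Set (Euc n) :=
  {x | (∀ i ∈ I, ⟪u i, x⟫ = a i) ∧ (∀ j ∈ J, ⟪u j, x⟫ < a j) ∧ (∀ k ∈ K, a k < ⟪u k, x⟫)}


/-!
By Motzkin's transposition theorem, `polyOpen u b I J K` is empty exactly when there is a Farkas
certificate: a vector `c` with `∑ c i • u i = 0`, `c ≥ 0` on `J`, `c ≤ 0` on `K`, `⟨c, b⟩ ≤ 0`,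
and `⟨c, b⟩ < 0` or `c ≠ 0` somewhere on `J ∪ K`. Writing `c` as a sum of circuit vectors
conformal to it, one of the summands is again a certificate. Whether a circuit vector is a
certificate depends on `b` only through the sign of `⟨c, b⟩`, which it shares with `⟨c, a⟩`;
so a certificate for `b` is one for `a`, which is impossible since `polyOpen u a I J K` is nonempty.
-/

open Function

section ConformalDecomposition

variable {ι : Type*}

def IsConformal (e c : ι → ℝ) : Prop :=
  ∀ i, (0 ≤ c i → 0 ≤ e i) ∧ (c i ≤ 0 → e i ≤ 0)

namespace IsConformal

variable {c d e : ι → ℝ}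

theorem refl (c : ι → ℝ) : IsConformal c c := fun _ => ⟨id, id⟩

theorem trans (hed : IsConformal e d) (hdc : IsConformal d c) : IsConformal e c :=
  fun i => ⟨fun h => (hed i).1 ((hdc i).1 h), fun h => (hed i).2 ((hdc i).2 h)⟩

theorem smul (hec : IsConformal e c) {t : ℝ} (ht : 0 ≤ t) : IsConformal (t • e) c :=
  fun i => ⟨fun h => mul_nonneg ht ((hec i).1 h),
    fun h => mul_nonpos_of_nonneg_of_nonpos ht ((hec i).2 h)⟩

theorem support_subset (hec : IsConformal e c) : support e ⊆ support c :=
  fun i hi hci => hi (le_antisymm ((hec i).2 hci.le) ((hec i).1 hci.ge))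

theorem exists_mul_pos (hec : IsConformal e c) (he : e ≠ 0) : ∃ i, 0 < c i * e i := by
  obtain ⟨i, hi⟩ := Function.ne_iff.mp he
  refine ⟨i, ?_⟩
  rcases (hec.support_subset hi).lt_or_gt with hc | hc
  · exact mul_pos_of_neg_of_neg hc (((hec i).2 hc.le).lt_of_ne hi)
  · exact mul_pos hc (((hec i).1 hc.le).lt_of_ne' hi)

end IsConformal

theorem isConformal_sub_smul_of_le_div {c d : ι → ℝ} (hdc : support d ⊆ support c) {t : ℝ}
    (ht : 0 ≤ t) (hle : ∀ i, 0 < c i * d i → t ≤ c i / d i) : IsConformal (c - t • d) c := by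
  intro i
  simp only [Pi.sub_apply, Pi.smul_apply, smul_eq_mul]
  rcases lt_trichotomy (d i) 0 with hd | hd | hd
  · rcases lt_trichotomy (c i) 0 with hc | hc | hc
    · have := (le_div_iff_of_neg hd).1 (hle i (mul_pos_of_neg_of_neg hc hd))
      constructor <;> intro <;> linarith
    · exact absurd hc (hdc hd.ne)
    · constructor <;> intro <;> nlinarith
  · simp [hd]
  · rcases lt_trichotomy (c i) 0 with hc | hc | hc
    · constructor <;> intro <;> nlinarith
    · exact absurd hc (hdc hd.ne')
    · have := (le_div_iff₀ hd).1 (hle i (mul_pos hc hd))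
      constructor <;> intro <;> linarith

def IsElementary (W : Submodule ℝ (ι → ℝ)) (e : ι → ℝ) : Prop :=
  e ∈ W ∧ e ≠ 0 ∧ ∀ d ∈ W, d ≠ 0 → ¬ support d ⊂ support e

theorem IsElementary.smul {W : Submodule ℝ (ι → ℝ)} {e : ι → ℝ} (he : IsElementary W e) {t : ℝ}
    (ht : t ≠ 0) : IsElementary W (t • e) := by
  obtain ⟨heW, he0, hmin⟩ := he
  refine ⟨W.smul_mem t heW, smul_ne_zero ht he0, ?_⟩
  rw [support_const_smul_of_ne_zero t e ht]
  exact hmin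

variable [Finite ι] {W : Submodule ℝ (ι → ℝ)}

theorem exists_isConformal_sub_smul {c d : ι → ℝ} (hdc : support d ⊆ support c)
    (hpos : ∃ i, 0 < c i * d i) :
    ∃ t : ℝ, 0 < t ∧ IsConformal (c - t • d) c ∧ support (c - t • d) ⊂ support c := by
  classical
  have := Fintype.ofFinite ι
  obtain ⟨i₀, hi₀, hmin⟩ := (Finset.univ.filter fun i => 0 < c i * d i).exists_min_image
    (fun i => c i / d i) (by simpa [Finset.Nonempty] using hpos)
  rw [Finset.mem_filter] at hi₀
  have hc₀ : c i₀ ≠ 0 := left_ne_zero_of_mul hi₀.2.ne'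
  have hd₀ : d i₀ ≠ 0 := right_ne_zero_of_mul hi₀.2.ne'
  have ht : 0 < c i₀ / d i₀ := div_pos_iff.2 (mul_pos_iff.1 hi₀.2)
  have hconf := isConformal_sub_smul_of_le_div hdc ht.le fun i hi => hmin i (by simpa using hi)
  refine ⟨_, ht, hconf, (Set.ssubset_iff_of_subset hconf.support_subset).2 ⟨i₀, hc₀, ?_⟩⟩
  simp [div_mul_cancel₀ _ hd₀]

theorem exists_isElementary_isConformal {c : ι → ℝ} (hc : c ∈ W) (hc0 : c ≠ 0) :
    ∃ e, IsElementary W e ∧ IsConformal e c := by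
  by_cases hel : IsElementary W c
  · exact ⟨c, hel, .refl c⟩
  obtain ⟨d, hdW, hd0, hdc⟩ : ∃ d ∈ W, d ≠ 0 ∧ support d ⊂ support c := by
    simpa [IsElementary, hc, hc0] using hel
  obtain ⟨d, hdW, hdc, hpos⟩ : ∃ d ∈ W, support d ⊂ support c ∧ ∃ i, 0 < c i * d i := by
    obtain ⟨i, hi⟩ := Function.ne_iff.mp hd0
    rcases (mul_ne_zero (hdc.subset hi) hi).lt_or_gt with h | h
    · exact ⟨-d, W.neg_mem hdW, by rwa [support_neg], i, by simpa using h⟩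
    · exact ⟨d, hdW, hdc, i, h⟩
  obtain ⟨t, -, hconf, hlt⟩ := exists_isConformal_sub_smul hdc.subset hpos
  -- at an index of `support c \ support d` the vector `c - t • d` agrees with `c`
  have hne : c - t • d ≠ 0 := by
    obtain ⟨i, hci, hdi⟩ := Set.exists_of_ssubset hdc
    exact Function.ne_iff.mpr ⟨i, by simpa [show d i = 0 by simpa using hdi] using hci⟩
  obtain ⟨e, he, heg⟩ := exists_isElementary_isConformal (W.sub_mem hc (W.smul_mem t hdW)) hne
  exact ⟨e, he, heg.trans hconf⟩
termination_by (support c).ncard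
decreasing_by exact Set.ncard_lt_ncard hlt

theorem exists_conformal_decomposition {c : ι → ℝ} (hc : c ∈ W) :
    ∃ l : List (ι → ℝ), l.sum = c ∧ ∀ e ∈ l, IsElementary W e ∧ IsConformal e c := by
  by_cases hc0 : c = 0
  · exact ⟨[], hc0.symm, by simp⟩
  obtain ⟨e, he, hec⟩ := exists_isElementary_isConformal hc hc0
  obtain ⟨t, ht, hconf, hlt⟩ :=
    exists_isConformal_sub_smul hec.support_subset (hec.exists_mul_pos he.2.1)
  obtain ⟨l, hl, hlc⟩ := exists_conformal_decomposition (W.sub_mem hc (W.smul_mem t he.1))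
  refine ⟨t • e :: l, by simp [hl], ?_⟩
  simp only [List.mem_cons, forall_eq_or_imp]
  exact ⟨⟨he.smul ht.ne', hec.smul ht.le⟩,
    fun e' he' => ⟨(hlc e' he').1, (hlc e' he').2.trans hconf⟩⟩
termination_by (support c).ncard
decreasing_by exact Set.ncard_lt_ncard hlt

end ConformalDecomposition

section Motzkin

open scoped Matrix

variable {ι : Type*} [Fintype ι]

theorem Submodule.exists_pos_or_exists_dotProduct_eq_zero (R : Submodule ℝ (ι → ℝ)) (P : Set ι) :
    (∃ y ∈ R, ∀ i ∈ P, 0 < y i) ∨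
      ∃ w : ι → ℝ, (∀ i ∈ P, 0 ≤ w i) ∧ (∃ i ∈ P, w i ≠ 0) ∧ ∀ y ∈ R, w ⬝ᵥ y = 0 := by
  classical
  refine or_iff_not_imp_left.2 fun hR => ?_
  let O : Set (ι → ℝ) := P.pi fun _ => Set.Ioi 0
  have hdisj : Disjoint O R := Set.disjoint_left.2 fun y hyO hyR => hR ⟨y, hyR, hyO⟩
  obtain ⟨f, u, hfO, hfR⟩ := geometric_hahn_banach_open (convex_pi fun _ _ => convex_Ioi 0)
    (isOpen_set_pi P.toFinite fun _ _ => isOpen_Ioi) R.convex hdisj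
  have hfR0 : ∀ y ∈ R, f y = 0 := fun y hy => by
    by_contra hy0
    have := hfR _ (R.smul_mem ((u - 1) / f y) hy)
    rw [map_smul, smul_eq_mul, div_mul_cancel₀ _ hy0] at this
    linarith
  have hfO0 : ∀ y ∈ O, f y < 0 := fun y hy => (hfO y hy).trans_le (by simpa using hfR 0 R.zero_mem)
  set w : ι → ℝ := fun i => -f (Pi.single i 1)
  have hf : ∀ y, f y = -(w ⬝ᵥ y) := fun y => by
    conv_lhs => rw [pi_eq_sum_univ' y]
    simp [w, dotProduct, mul_comm]
  refine ⟨w, fun i hi => ?_, ?_, fun y hy => by simpa [hf] using hfR0 y hy⟩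
  · by_contra! hwi
    have hei : 0 < f (Pi.single i 1) := by simpa [w] using hwi
    have hmem : ((|f 1| + 1) / f (Pi.single i 1)) • Pi.single i 1 + 1 ∈ O := fun j _ => by
      rcases eq_or_ne j i with rfl | hji
      · simpa using add_pos (div_pos (by positivity : 0 < |f 1| + 1) hei) one_pos
      · simp [Pi.single_eq_of_ne hji]
    have := hfO0 _ hmem
    rw [map_add, map_smul, smul_eq_mul, div_mul_cancel₀ _ hei.ne'] at this
    linarith [neg_abs_le (f 1)]
  · have hind := hfO0 (P.indicator 1) fun j hj => by simp [hj]
    rw [hf, neg_neg_iff_pos] at hind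
    obtain ⟨i, -, hi⟩ := Finset.exists_ne_zero_of_sum_ne_zero hind.ne'
    have hiP : i ∈ P := by by_contra h; simp [h] at hi
    exact ⟨i, hiP, left_ne_zero_of_mul hi⟩

theorem Module.Dual.exists_pos_or_exists_sum_smul_eq_zero {Z : Type*} [AddCommGroup Z] [Module ℝ Z]
    (f : ι → Module.Dual ℝ Z) (P : Set ι) :
    (∃ z, (∀ i ∉ P, f i z = 0) ∧ ∀ i ∈ P, 0 < f i z) ∨
      ∃ w : ι → ℝ, (∀ i ∈ P, 0 ≤ w i) ∧ (∃ i ∈ P, w i ≠ 0) ∧ ∑ i, w i • f i = 0 := by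
  classical
  let g : ι → Module.Dual ℝ Z := fun i => if i ∈ P then 0 else f i
  let N := ⨅ i, LinearMap.ker (g i)
  have hN : ∀ z, z ∈ N ↔ ∀ i ∉ P, f i z = 0 := fun z => by
    simp only [N, Submodule.mem_iInf, LinearMap.mem_ker]
    exact forall_congr' fun i => by by_cases hi : i ∈ P <;> simp [g, hi]
  rcases (N.map (LinearMap.pi f)).exists_pos_or_exists_dotProduct_eq_zero P with
    ⟨_, ⟨z, hz, rfl⟩, hpos⟩ | ⟨w, hwP, hw0, hwN⟩
  · exact .inl ⟨z, (hN z).1 hz, hpos⟩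
  -- the combination `∑ w i • f i` vanishes on `N`, so it is a combination of the `f i`, `i ∉ P`
  obtain ⟨μ, hμ⟩ := (Submodule.mem_span_range_iff_exists_fun ℝ).1 <|
    mem_span_of_iInf_ker_le_ker (L := g) (K := ∑ i, w i • f i) fun z hz => by
      simpa [dotProduct, mul_comm] using hwN _ ⟨z, hz, rfl⟩
  refine .inr ⟨w - fun i => if i ∈ P then 0 else μ i, fun i hi => by simpa [hi] using hwP i hi,
    hw0.imp fun i ⟨hi, hwi⟩ => ⟨hi, by simpa [hi] using hwi⟩, ?_⟩
  calc ∑ i, (w - fun i => if i ∈ P then 0 else μ i) i • f i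
      = ∑ i, w i • f i - ∑ i, μ i • g i := by
        rw [← Finset.sum_sub_distrib]
        refine Finset.sum_congr rfl fun i _ => ?_
        by_cases hi : i ∈ P <;> simp [g, hi]
        exact sub_smul (w i) (μ i) (f i)
    _ = 0 := by rw [hμ, sub_self]

end Motzkin

section Circuits

theorem linearIndepOn_iff_of_fintype {ι R M : Type*} [Fintype ι] [Ring R] [AddCommGroup M]
    [Module R M] {v : ι → M} {s : Set ι} :
    LinearIndepOn R v s ↔ ∀ g : ι → R, support g ⊆ s → ∑ i, g i • v i = 0 → g = 0 := by
  classical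
  have hsum : ∀ g : ι → R, support g ⊆ s → ∑ i ∈ s.toFinset, g i • v i = ∑ i, g i • v i :=
    fun g hg => Finset.sum_subset (Finset.subset_univ _) fun i _ hi => by
      simp [notMem_support.1 fun h => hi (Set.mem_toFinset.2 (hg h))]
  rw [linearIndepOn_iff'']
  refine ⟨fun h g hg h0 => funext fun i => ?_, fun h t g hts hgt h0 i _ => ?_⟩
  · by_cases hi : i ∈ s
    · exact h s.toFinset g (by simp)
        (fun j hj => notMem_support.1 fun h => hj (by simpa using hg h))
        (by rw [hsum g hg, h0]) i (by simpa using hi)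
    · exact notMem_support.1 fun h => hi (hg h)
  · have hgt' : support g ⊆ t := fun j hj => by_contra fun h => hj (hgt j h)
    refine congrFun (h g (hgt'.trans hts) ?_) i
    rwa [← Finset.sum_subset (Finset.subset_univ t) fun j _ hj => by simp [hgt j hj]]

variable {n m : ℕ} {u : Fin m → Euc n}

theorem IsElementary.isCircuitVector {e : Fin m → ℝ}
    (he : IsElementary (LinearMap.ker (Fintype.linearCombination ℝ u)) e) :
    IsCircuitVector u e := by
  obtain ⟨heW, he0, hmin⟩ := he
  have heW' : ∑ i, e i • u i = 0 := by simpa [Fintype.linearCombination_apply] using heW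
  refine ⟨heW', fun hind => he0 (linearIndepOn_iff_of_fintype.1 hind e subset_rfl heW'),
    fun D hD => linearIndepOn_iff_of_fintype.2 fun g hgD hg0 => ?_⟩
  by_contra hg
  exact hmin g (by simpa [Fintype.linearCombination_apply] using hg0) hg
    (Set.ssubset_of_subset_of_ssubset hgD hD)

end Circuits

section FarkasCertificate

variable {n m : ℕ} {u : Fin m → Euc n} {a b c : Fin m → ℝ} {I J K : Set (Fin m)}

structure IsFarkasCertificate (u : Fin m → Euc n) (b : Fin m → ℝ) (J K : Set (Fin m))
    (c : Fin m → ℝ) : Prop where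
  sum_smul_eq_zero : ∑ i, c i • u i = 0
  nonneg : ∀ j ∈ J, 0 ≤ c j
  nonpos : ∀ k ∈ K, c k ≤ 0
  dotm_nonpos : dotm c b ≤ 0
  dotm_neg_or_ne_zero : dotm c b < 0 ∨ ∃ l ∈ J ∪ K, c l ≠ 0

namespace IsFarkasCertificate

theorem polyOpen_eq_empty (hc : IsFarkasCertificate u b J K c) (hIJK : I ∪ J ∪ K = Set.univ) :
    polyOpen u b I J K = ∅ := by
  refine Set.eq_empty_of_forall_notMem fun x ⟨hxI, hxJ, hxK⟩ => ?_
  have hzero : ∑ i, c i * ⟪u i, x⟫ = 0 := by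
    simpa [sum_inner, real_inner_smul_left] using congrArg (⟪·, x⟫) hc.sum_smul_eq_zero
  have hle : ∀ i ∈ Finset.univ, c i * ⟪u i, x⟫ ≤ c i * b i := fun i _ => by
    obtain (hi | hi) | hi := (Set.ext_iff.1 hIJK i).2 trivial
    · rw [hxI i hi]
    · exact mul_le_mul_of_nonneg_left (hxJ i hi).le (hc.nonneg i hi)
    · exact mul_le_mul_of_nonpos_left (hxK i hi).le (hc.nonpos i hi)
  rcases hc.dotm_neg_or_ne_zero with hneg | ⟨l, hl, hcl⟩
  · linarith [Finset.sum_le_sum hle, show dotm c b = ∑ i, c i * b i from rfl]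
  · have hlt : c l * ⟪u l, x⟫ < c l * b l := by
      rcases hl with hl | hl
      · exact mul_lt_mul_of_pos_left (hxJ l hl) ((hc.nonneg l hl).lt_of_ne' hcl)
      · exact mul_lt_mul_of_neg_left (hxK l hl) ((hc.nonpos l hl).lt_of_ne hcl)
    linarith [Finset.sum_lt_sum hle ⟨l, Finset.mem_univ l, hlt⟩, hc.dotm_nonpos,
      show dotm c b = ∑ i, c i * b i from rfl]

theorem of_sameOpenFace (hc : IsFarkasCertificate u b J K c) (hcirc : IsCircuitVector u c)
    (hab : SameOpenFace u a b) : IsFarkasCertificate u a J K c := by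
  have hsign := hab c hcirc
  refine ⟨hc.sum_smul_eq_zero, hc.nonneg, hc.nonpos, ?_, ?_⟩
  · rw [← sign_nonpos_iff, hsign, sign_nonpos_iff]
    exact hc.dotm_nonpos
  · rw [← sign_eq_neg_one_iff, hsign, sign_eq_neg_one_iff]
    exact hc.dotm_neg_or_ne_zero

theorem exists_isCircuitVector (hc : IsFarkasCertificate u b J K c) :
    ∃ e, IsCircuitVector u e ∧ IsFarkasCertificate u b J K e := by
  obtain ⟨l, hl, hlc⟩ := exists_conformal_decomposition (c := c)
    (W := LinearMap.ker (Fintype.linearCombination ℝ u))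
    (by simpa [Fintype.linearCombination_apply] using hc.sum_smul_eq_zero)
  have hcert : ∀ e ∈ l, dotm e b ≤ 0 → (dotm e b < 0 ∨ ∃ k ∈ J ∪ K, e k ≠ 0) →
      IsCircuitVector u e ∧ IsFarkasCertificate u b J K e := fun e he hle hlt =>
    ⟨(hlc e he).1.isCircuitVector,
      ⟨by simpa [Fintype.linearCombination_apply] using (hlc e he).1.1,
        fun j hj => ((hlc e he).2 j).1 (hc.nonneg j hj),
        fun k hk => ((hlc e he).2 k).2 (hc.nonpos k hk), hle, hlt⟩⟩
  -- `dotm · b` is the linear form `Fintype.linearCombination ℝ b`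
  have hdot : dotm c b = (l.map (dotm · b)).sum := by
    rw [← hl]
    exact map_list_sum (Fintype.linearCombination ℝ b) l
  by_cases hneg : ∃ e ∈ l, dotm e b < 0
  · obtain ⟨e, he, hneg⟩ := hneg
    exact ⟨e, hcert e he hneg.le (.inl hneg)⟩
  push Not at hneg
  have hnonneg : ∀ x ∈ l.map (dotm · b), 0 ≤ x := by simpa using hneg
  have hc0 : dotm c b = 0 := le_antisymm hc.dotm_nonpos (hdot ▸ List.sum_nonneg hnonneg)
  obtain ⟨k, hk, hck⟩ := hc.dotm_neg_or_ne_zero.resolve_left hc0.not_lt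
  obtain ⟨e, he, hek⟩ : ∃ e ∈ l, e k ≠ 0 := by
    have : (l.map (· k)).sum ≠ 0 := by rwa [← Pi.list_sum_apply, hl]
    simpa using List.exists_mem_ne_zero_of_sum_ne_zero this
  refine ⟨e, hcert e he ?_ (.inr ⟨k, hk, hek⟩)⟩
  calc dotm e b ≤ (l.map (dotm · b)).sum := List.single_le_sum hnonneg _ (List.mem_map_of_mem he)
    _ = 0 := hdot ▸ hc0

end IsFarkasCertificate

theorem polyOpen_nonempty_or_exists_isFarkasCertificate (hIJK : IsTripartition I J K) :
    (polyOpen u b I J K).Nonempty ∨ ∃ c, IsFarkasCertificate u b J K c := by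
  classical
  obtain ⟨hcov, hIJ, hIK, hJK⟩ := hIJK
  -- homogenization: `s⁻¹ • x ∈ polyOpen u b I J K` if `s = f none (x, s) > 0` and the forms
  -- `f (some i)` vanish at `(x, s)` for `i ∈ I` and are positive there otherwise
  let σ : Fin m → ℝ := fun i => if i ∈ K then -1 else 1
  let f : Option (Fin m) → Module.Dual ℝ (Euc n × ℝ) := fun o => o.elim (LinearMap.snd ℝ _ _)
    fun i => σ i • (b i • LinearMap.snd ℝ _ _ - (innerₛₗ ℝ (u i)).comp (LinearMap.fst ℝ _ _))
  have hf₀ : ∀ x s, f none (x, s) = s := fun _ _ => rfl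
  have hf : ∀ x s i, f (some i) (x, s) = σ i * (s * b i - ⟪u i, x⟫) := by
    simp [f, mul_comm]
  have hσ : ∀ i, σ i ≠ 0 := fun i => by by_cases hi : i ∈ K <;> simp [σ, hi]
  have hσJ : ∀ j ∈ J, σ j = 1 := fun j hj => if_neg (Set.disjoint_left.1 hJK hj)
  have hσK : ∀ k ∈ K, σ k = -1 := fun k hk => if_pos hk
  rcases Module.Dual.exists_pos_or_exists_sum_smul_eq_zero f (Option.some '' I)ᶜ with
    ⟨⟨x, s⟩, hzI, hzP⟩ | ⟨w, hwP, hw0, hw⟩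
  · have hs : 0 < s := hzP none (by simp)
    have hinner : ∀ i, ⟪u i, s⁻¹ • x⟫ = s⁻¹ * ⟪u i, x⟫ := fun i => real_inner_smul_right _ _ _
    refine .inl ⟨s⁻¹ • x, fun i hi => ?_, fun j hj => ?_, fun k hk => ?_⟩
    · have := hf x s i ▸ hzI (some i) (by simpa using hi)
      rw [hinner, inv_mul_eq_iff_eq_mul₀ hs.ne']
      linarith [(mul_eq_zero.1 this).resolve_left (hσ i)]
    · have := hf x s j ▸ hzP (some j) (by simpa using Set.disjoint_right.1 hIJ hj)
      rw [hσJ j hj] at this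
      rw [hinner, inv_mul_lt_iff₀ hs]
      linarith
    · have := hf x s k ▸ hzP (some k) (by simpa using Set.disjoint_right.1 hIK hk)
      rw [hσK k hk] at this
      rw [hinner, lt_inv_mul_iff₀ hs]
      linarith
  · set c : Fin m → ℝ := fun i => σ i * w (some i)
    have heval : ∀ x s, w none * s + ∑ i, c i * (s * b i - ⟪u i, x⟫) = 0 := fun x s => by
      simpa [Fintype.sum_option, hf₀, hf, c, mul_left_comm, mul_assoc] using
        LinearMap.congr_fun hw (x, s)
    have hdot : dotm c b = -w none := by
      simpa [dotm, add_eq_zero_iff_eq_neg'] using heval 0 1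
    have hsum : ∑ i, c i • u i = 0 := by
      have := heval (∑ i, c i • u i) 0
      simp only [mul_zero, zero_mul, zero_sub, zero_add, mul_neg, Finset.sum_neg_distrib,
        neg_eq_zero, ← real_inner_smul_left, ← sum_inner] at this
      exact inner_self_eq_zero.1 this
    refine .inr ⟨c, hsum, fun j hj => ?_, fun k hk => ?_, ?_, ?_⟩
    · simpa [c, hσJ j hj] using hwP (some j) (by simpa using Set.disjoint_right.1 hIJ hj)
    · simpa [c, hσK k hk] using hwP (some k) (by simpa using Set.disjoint_right.1 hIK hk)
    · linarith [hwP none (by simp)]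
    · obtain ⟨o, ho, hwo⟩ := hw0
      cases o with
      | none => exact .inl (by linarith [(hwP none ho).lt_of_ne' hwo])
      | some l =>
        have hl : l ∈ J ∪ K := by
          obtain (h | h) | h := (Set.ext_iff.1 hcov l).2 trivial
          exacts [absurd h (by simpa using ho), .inl h, .inr h]
        exact .inr ⟨l, hl, mul_ne_zero (hσ l) hwo⟩

end FarkasCertificate

theorem polyOpen_nonempty_of_sameOpenFace_general {n m : ℕ}
    (u : Fin m → Euc n)
    (a b : Fin m → ℝ) (hab : SameOpenFace u a b)
    (I J K : Set (Fin m)) (hIJK : IsTripartition I J K)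
    (hne : (polyOpen u a I J K).Nonempty) :
    (polyOpen u b I J K).Nonempty := by
  refine (polyOpen_nonempty_or_exists_isFarkasCertificate hIJK).resolve_right ?_
  rintro ⟨c, hc⟩
  obtain ⟨e, he, hec⟩ := hc.exists_isCircuitVector
  exact hne.ne_empty ((hec.of_sameOpenFace he hab).polyOpen_eq_empty hIJK.1)

theorem polyOpen_nonempty_of_sameOpenFace {n m : ℕ} (hn : 1 ≤ n) (hm : 1 ≤ m)
    (u : Fin m → Euc n) (hu : ∀ i, u i ≠ 0)
    (a b : Fin m → ℝ) (hab : SameOpenFace u a b)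
    (I J K : Set (Fin m)) (hIJK : IsTripartition I J K)
    (hne : (polyOpen u a I J K).Nonempty) :
    (polyOpen u b I J K).Nonempty :=
  polyOpen_nonempty_of_sameOpenFace_general u a b hab I J K hIJK hne
end
end

section
/- Suppose P := P(a,I,J,K) is nonempty and F is a nonempty face of P. Let I(F) := {i ∈ {1,…,m} : ⟨u_i,x⟩ = a_i for every x ∈ F}. Then F = P(a, I(F), J∖I(F), K∖I(F)), and the dimension of F equals n minus the dimension of the linear span of {u_i : i ∈ I(F)}. -/
open RealInnerProductSpace

noncomputable section

/-- The active index set of a subset `G` of `ℝ^n` with respect to `a`. -/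
def activeSet {n m : ℕ} (u : Fin m → Euc n) (a : Fin m → ℝ) (G : Set (Euc n)) :
    Set (Fin m) :=
  {i | ∀ x ∈ G, ⟪u i, x⟫ = a i}

private lemma inner_comb {n : ℕ} (w x y : Euc n) (s t : ℝ) :
    ⟪w, s•x + t•y⟫ = s*⟪w,x⟫ + t*⟪w,y⟫ := by
  rw [inner_add_right, real_inner_smul_right, real_inner_smul_right]

private lemma inner_line {n : ℕ} (w x d : Euc n) (t : ℝ) :
    ⟪w, x + t•d⟫ = ⟪w,x⟫ + t*⟪w,d⟫ := by
  rw [inner_add_right, real_inner_smul_right]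

theorem face_characterization {n m : ℕ} (hn : 1 ≤ n) (hm : 1 ≤ m)
    (u : Fin m → Euc n) (hu : ∀ i, u i ≠ 0)
    (a : Fin m → ℝ) (I J K : Set (Fin m)) (hIJK : IsTripartition I J K)
    (hne : (poly u a I J K).Nonempty)
    (F : Set (Euc n)) (hF : IsFace (poly u a I J K) F) (hFne : F.Nonempty) :
    F = poly u a (activeSet u a F) (J \ activeSet u a F) (K \ activeSet u a F) ∧
      Module.finrank ℝ (affineSpan ℝ F).direction +
        Module.finrank ℝ (Submodule.span ℝ (u '' activeSet u a F)) = n := by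
  classical
  obtain ⟨hunion, hIJ, hIK, hJK⟩ := hIJK
  set P := poly u a I J K with hPdef
  rcases hF with hF0 | ⟨v, hFv⟩
  · exact absurd hF0 (Set.nonempty_iff_ne_empty.1 hFne)
  set Act := activeSet u a F with hActdef
  have hFP : F ⊆ P := by intro x hx; rw [hFv] at hx; exact hx.1
  have hmax : ∀ x ∈ F, ∀ y ∈ P, ⟪v, y⟫ ≤ ⟪v, x⟫ := by
    intro x hx; rw [hFv] at hx; exact hx.2
  have hIAct : I ⊆ Act := fun i hi x hx => (hFP hx).1 i hi
  have hActMem : ∀ i, i ∈ Act ↔ ∀ x ∈ F, ⟪u i, x⟫ = a i := fun i => Iff.rfl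
  -- midpoints stay in F
  have hmid : ∀ x ∈ F, ∀ y ∈ F, (1/2:ℝ)•x + (1/2:ℝ)•y ∈ F := by
    intro x hx y hy
    rw [hFv]
    have hxP := hFP hx; have hyP := hFP hy
    refine ⟨⟨?_, ?_, ?_⟩, ?_⟩
    · intro i hi
      rw [inner_comb, hxP.1 i hi, hyP.1 i hi]; ring
    · intro j hj
      rw [inner_comb]
      have := hxP.2.1 j hj; have := hyP.2.1 j hj; linarith
    · intro k hk
      rw [inner_comb]
      have := hxP.2.2 k hk; have := hyP.2.2 k hk; linarith
    · intro z hz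
      rw [inner_comb]
      have h1 := hmax x hx z hz; have h2 := hmax y hy z hz; linarith
  -- a "good" point of F: strict at all inactive inequality constraints
  have hgood : ∃ x₀ ∈ F, ∀ j, j ∉ Act →
      (j ∈ J → ⟪u j, x₀⟫ < a j) ∧ (j ∈ K → a j < ⟪u j, x₀⟫) := by
    have key : ∀ T : Finset (Fin m), ∃ x ∈ F, ∀ j ∈ T, j ∉ Act →
        (j ∈ J → ⟪u j, x⟫ < a j) ∧ (j ∈ K → a j < ⟪u j, x⟫) := by
      intro T
      induction T using Finset.induction with
      | empty =>
        obtain ⟨x, hx⟩ := hFne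
        exact ⟨x, hx, by simp⟩
      | @insert j T hjT ih =>
        obtain ⟨x, hxF, hx⟩ := ih
        by_cases hjA : j ∈ Act
        · refine ⟨x, hxF, fun k hk hkA => ?_⟩
          rcases Finset.mem_insert.1 hk with rfl | hk
          · exact absurd hjA hkA
          · exact hx k hk hkA
        · have : ¬ ∀ z ∈ F, ⟪u j, z⟫ = a j := hjA
          push_neg at this
          obtain ⟨z, hzF, hz⟩ := this
          have hzP := hFP hzF; have hxP := hFP hxF
          refine ⟨(1/2:ℝ)•x + (1/2:ℝ)•z, hmid x hxF z hzF, fun k hk hkA => ?_⟩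
          rcases Finset.mem_insert.1 hk with rfl | hk
          · constructor
            · intro hkJ
              rw [inner_comb]
              have h1 := hxP.2.1 k hkJ
              have h2 := lt_of_le_of_ne (hzP.2.1 k hkJ) hz
              linarith
            · intro hkK
              rw [inner_comb]
              have h1 := hxP.2.2 k hkK
              have h2 := lt_of_le_of_ne (hzP.2.2 k hkK) (Ne.symm hz)
              linarith
          · have hk' := hx k hk hkA
            constructor
            · intro hkJ
              rw [inner_comb]
              have h1 := hk'.1 hkJ
              have h2 := hzP.2.1 k hkJ
              linarith
            · intro hkK
              rw [inner_comb]
              have h1 := hk'.2 hkK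
              have h2 := hzP.2.2 k hkK
              linarith
    obtain ⟨x, hxF, hx⟩ := key Finset.univ
    exact ⟨x, hxF, fun j => hx j (Finset.mem_univ j)⟩
  obtain ⟨x₀, hx₀F, hx₀⟩ := hgood
  have hx₀P := hFP hx₀F
  -- perturbation lemma
  have hperturb : ∀ d : Euc n, (∀ i ∈ Act, ⟪u i, d⟫ = 0) →
      ∃ t : ℝ, 0 < t ∧ (∀ j ∈ Act, ⟪u j, x₀ + t•d⟫ = a j) ∧
        (∀ j, j ∈ J → j ∉ Act → ⟪u j, x₀ + t•d⟫ < a j) ∧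
        (∀ j, j ∈ K → j ∉ Act → a j < ⟪u j, x₀ + t•d⟫) := by
    intro d hd
    have hcont : ∀ j : Fin m, Filter.Tendsto (fun t : ℝ => ⟪u j, x₀ + t•d⟫)
        (nhds 0) (nhds ⟪u j, x₀⟫) := by
      intro j
      simp only [inner_line]
      exact (continuous_const.add (continuous_id.mul continuous_const)).tendsto' 0 _ (by simp)
    have hev : ∀ᶠ t in nhds (0:ℝ), ∀ j : Fin m,
        (j ∈ J → j ∉ Act → ⟪u j, x₀ + t•d⟫ < a j) ∧
        (j ∈ K → j ∉ Act → a j < ⟪u j, x₀ + t•d⟫) := by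
      rw [Filter.eventually_all]
      intro j
      by_cases hjA : j ∈ Act
      · filter_upwards with t
        exact ⟨fun _ h => absurd hjA h, fun _ h => absurd hjA h⟩
      · have h1 : ∀ᶠ t in nhds (0:ℝ), j ∈ J → j ∉ Act → ⟪u j, x₀ + t•d⟫ < a j := by
          by_cases hjJ : j ∈ J
          · filter_upwards [(hcont j).eventually_lt_const ((hx₀ j hjA).1 hjJ)] with t ht
            exact fun _ _ => ht
          · filter_upwards with t hJ; exact absurd hJ hjJ
        have h2 : ∀ᶠ t in nhds (0:ℝ), j ∈ K → j ∉ Act → a j < ⟪u j, x₀ + t•d⟫ := by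
          by_cases hjK : j ∈ K
          · filter_upwards [(hcont j).eventually_const_lt ((hx₀ j hjA).2 hjK)] with t ht
            exact fun _ _ => ht
          · filter_upwards with t hK; exact absurd hK hjK
        exact h1.and h2
    have hev' : ∀ᶠ t in nhdsWithin (0:ℝ) (Set.Ioi 0), (0 < t) ∧ ∀ j : Fin m,
        (j ∈ J → j ∉ Act → ⟪u j, x₀ + t•d⟫ < a j) ∧
        (j ∈ K → j ∉ Act → a j < ⟪u j, x₀ + t•d⟫) :=
      (eventually_mem_nhdsWithin.mono (fun t ht => ht)).and (hev.filter_mono nhdsWithin_le_nhds)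
    obtain ⟨t, ht, hall⟩ := hev'.exists
    refine ⟨t, ht, ?_, fun j hj hjA => (hall j).1 hj hjA, fun j hj hjA => (hall j).2 hj hjA⟩
    intro j hjA
    rw [inner_line, hjA x₀ hx₀F, hd j hjA]; ring
  -- Part 1
  have hpart1 : F = poly u a Act (J \ Act) (K \ Act) := by
    apply Set.Subset.antisymm
    · intro x hx
      have hxP := hFP hx
      exact ⟨fun i hi => hi x hx, fun j hj => hxP.2.1 j hj.1, fun k hk => hxP.2.2 k hk.1⟩
    · intro y hy
      obtain ⟨hy1, hy2, hy3⟩ := hy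
      have hyP : y ∈ P := by
        refine ⟨fun i hi => hy1 i (hIAct hi), fun j hj => ?_, fun k hk => ?_⟩
        · by_cases hjA : j ∈ Act
          · exact le_of_eq (hy1 j hjA)
          · exact hy2 j ⟨hj, hjA⟩
        · by_cases hkA : k ∈ Act
          · exact ge_of_eq (hy1 k hkA)
          · exact hy3 k ⟨hk, hkA⟩
      have hd : ∀ i ∈ Act, ⟪u i, x₀ - y⟫ = 0 := by
        intro i hi
        rw [inner_sub_right, hi x₀ hx₀F, hy1 i hi]; ring
      obtain ⟨t, ht, heq, hJlt, hKlt⟩ := hperturb (x₀ - y) hd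
      have hzP : x₀ + t•(x₀ - y) ∈ P := by
        refine ⟨fun i hi => heq i (hIAct hi), fun j hj => ?_, fun k hk => ?_⟩
        · by_cases hjA : j ∈ Act
          · exact le_of_eq (heq j hjA)
          · exact le_of_lt (hJlt j hj hjA)
        · by_cases hkA : k ∈ Act
          · exact ge_of_eq (heq k hkA)
          · exact le_of_lt (hKlt k hk hkA)
      have h1 := hmax x₀ hx₀F _ hzP
      have h2 := hmax x₀ hx₀F y hyP
      rw [inner_line, inner_sub_right] at h1
      have hvy : ⟪v, y⟫ = ⟪v, x₀⟫ := by nlinarith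
      rw [hFv]
      exact ⟨hyP, fun z hz => (hmax x₀ hx₀F z hz).trans (le_of_eq hvy.symm)⟩
  refine ⟨hpart1, ?_⟩
  -- Part 2
  set U := Submodule.span ℝ (u '' Act) with hUdef
  have hdir : (affineSpan ℝ F).direction = Uᗮ := by
    apply le_antisymm
    · rw [direction_affineSpan]
      rw [vectorSpan_def]
      rw [Submodule.span_le]
      rintro d ⟨x, hx, y, hy, rfl⟩
      rw [SetLike.mem_coe, Submodule.mem_orthogonal]
      intro w hw
      induction hw using Submodule.span_induction with
      | mem w hw =>
        obtain ⟨i, hi, rfl⟩ := hw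
        show ⟪u i, x - y⟫ = 0
        rw [inner_sub_right, hi x hx, hi y hy]; ring
      | zero => exact inner_zero_left _
      | add w₁ w₂ _ _ h1 h2 => rw [inner_add_left, h1, h2]; ring
      | smul c w _ h => rw [real_inner_smul_left, h]; ring
    · intro w hw
      have hwi : ∀ i ∈ Act, ⟪u i, w⟫ = 0 := by
        intro i hi
        exact (Submodule.mem_orthogonal U w).1 hw (u i)
          (Submodule.subset_span ⟨i, hi, rfl⟩)
      obtain ⟨t, ht, heq, hJlt, hKlt⟩ := hperturb w hwi
      have hzF : x₀ + t•w ∈ F := by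
        rw [hpart1]
        exact ⟨fun i hi => heq i hi, fun j hj => le_of_lt (hJlt j hj.1 hj.2),
          fun k hk => le_of_lt (hKlt k hk.1 hk.2)⟩
      have hmem : (x₀ + t•w) -ᵥ x₀ ∈ (affineSpan ℝ F).direction :=
        AffineSubspace.vsub_mem_direction (subset_affineSpan ℝ F hzF)
          (subset_affineSpan ℝ F hx₀F)
      have hsub : (x₀ + t•w) -ᵥ x₀ = t•w := by
        show (x₀ + t•w) - x₀ = t•w
        abel
      rw [hsub] at hmem
      have := Submodule.smul_mem (affineSpan ℝ F).direction t⁻¹ hmem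
      rwa [smul_smul, inv_mul_cancel₀ (ne_of_gt ht), one_smul] at this
  rw [hdir]
  have hfr := Submodule.finrank_add_finrank_orthogonal U
  rw [finrank_euclideanSpace_fin] at hfr
  omega
end
end

section
/- Let P and Q be convex polyhedra in ℝ^n, i.e. each is an intersection of finitely many closed half-spaces {x : ⟨v,x⟩ ≤ c}. If P and Q are normally equivalent, i.e. {N_P(x) : x ∈ P} = {N_Q(y) : y ∈ Q}, then P and Q are combinatorially equivalent: there exists a bijection Φ from the set of faces of P onto the set of faces of Q such that for all faces F, G of P, F ⊆ G if and only if Φ(F) ⊆ Φ(G). -/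
open RealInnerProductSpace

noncomputable section

/-- A convex polyhedron: an intersection of finitely many closed half-spaces. -/
def IsPolyhedron {n : ℕ} (P : Set (Euc n)) : Prop :=
  ∃ (k : ℕ) (v : Fin k → Euc n) (c : Fin k → ℝ), P = {x | ∀ i, ⟪v i, x⟫ ≤ c i}

/-- The exposed face of `P` in direction `v`. -/
def Fv {n : ℕ} (P : Set (Euc n)) (v : Euc n) : Set (Euc n) :=
  {x ∈ P | ∀ y ∈ P, ⟪v, y⟫ ≤ ⟪v, x⟫}

lemma Fv_subset_iff {n : ℕ} (P : Set (Euc n)) (v w : Euc n) :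
    Fv P v ⊆ Fv P w ↔ ∀ N ∈ normalFan P, v ∈ N → w ∈ N := by
  constructor
  · rintro hsub N ⟨x, hx, rfl⟩ hv
    exact (hsub ⟨hx, hv⟩).2
  · rintro hN x ⟨hx, hv⟩
    exact ⟨hx, hN _ ⟨x, hx, rfl⟩ hv⟩

lemma Fv_nonempty_iff {n : ℕ} (P : Set (Euc n)) (v : Euc n) :
    (Fv P v).Nonempty ↔ ∃ N ∈ normalFan P, v ∈ N := by
  constructor
  · rintro ⟨x, hx, hv⟩
    exact ⟨normalCone P x, ⟨x, hx, rfl⟩, hv⟩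
  · rintro ⟨N, ⟨x, hx, rfl⟩, hv⟩
    exact ⟨x, hx, hv⟩

open Classical in
/-- The candidate bijection on faces: send `∅` to `∅`, and a nonempty exposed face
`F_v` of `P` to `F_v` of `Q` (choosing a direction `v`). -/
def faceMap {n : ℕ} (P Q : Set (Euc n)) (F : {F : Set (Euc n) // IsFace P F}) :
    Set (Euc n) :=
  if hF : (F : Set (Euc n)) = ∅ then ∅ else Fv Q (F.2.resolve_left hF).choose

lemma faceMap_isFace {n : ℕ} (P Q : Set (Euc n)) (F : {F : Set (Euc n) // IsFace P F}) :
    IsFace Q (faceMap P Q F) := by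
  classical
  unfold faceMap
  split
  · exact Or.inl rfl
  · exact Or.inr ⟨_, rfl⟩

lemma faceMap_empty {n : ℕ} (P Q : Set (Euc n)) (F : {F : Set (Euc n) // IsFace P F})
    (hF : (F : Set (Euc n)) = ∅) : faceMap P Q F = ∅ := by
  classical
  simp [faceMap, hF]

lemma faceMap_spec {n : ℕ} (P Q : Set (Euc n)) (F : {F : Set (Euc n) // IsFace P F})
    (hF : (F : Set (Euc n)) ≠ ∅) :
    ∃ v : Euc n, (F : Set (Euc n)) = Fv P v ∧ faceMap P Q F = Fv Q v := by
  classical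
  refine ⟨(F.2.resolve_left hF).choose, (F.2.resolve_left hF).choose_spec, ?_⟩
  simp [faceMap, hF]

theorem combinatorially_equivalent_of_normally_equivalent {n : ℕ}
    (P Q : Set (Euc n)) (hP : IsPolyhedron P) (hQ : IsPolyhedron Q)
    (h : normalFan P = normalFan Q) :
    ∃ Φ : {F : Set (Euc n) // IsFace P F} ≃ {G : Set (Euc n) // IsFace Q G},
      ∀ F G : {F : Set (Euc n) // IsFace P F},
        (F : Set (Euc n)) ⊆ (G : Set (Euc n)) ↔ (Φ F : Set (Euc n)) ⊆ (Φ G : Set (Euc n)) := by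
  classical
  have key : ∀ v w : Euc n, Fv P v ⊆ Fv P w ↔ Fv Q v ⊆ Fv Q w := by
    intro v w
    rw [Fv_subset_iff, Fv_subset_iff, h]
  have keyE : ∀ v : Euc n, Fv P v = ∅ ↔ Fv Q v = ∅ := by
    intro v
    rw [← Set.not_nonempty_iff_eq_empty, ← Set.not_nonempty_iff_eq_empty,
      Fv_nonempty_iff, Fv_nonempty_iff, h]
  -- the two maps compose to the identity
  have inv : ∀ (P' Q' : Set (Euc n)) (h' : normalFan P' = normalFan Q')
      (F : {F : Set (Euc n) // IsFace P' F}) (hG : IsFace Q' (faceMap P' Q' F)),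
      faceMap Q' P' ⟨faceMap P' Q' F, hG⟩ = (F : Set (Euc n)) := by
    intro P' Q' h' F hG
    have key' : ∀ v w : Euc n, Fv P' v ⊆ Fv P' w ↔ Fv Q' v ⊆ Fv Q' w := by
      intro v w
      rw [Fv_subset_iff, Fv_subset_iff, h']
    have keyE' : ∀ v : Euc n, Fv P' v = ∅ ↔ Fv Q' v = ∅ := by
      intro v
      rw [← Set.not_nonempty_iff_eq_empty, ← Set.not_nonempty_iff_eq_empty,
        Fv_nonempty_iff, Fv_nonempty_iff, h']
    by_cases hF : (F : Set (Euc n)) = ∅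
    · have h1 : faceMap P' Q' F = ∅ := faceMap_empty P' Q' F hF
      have h2 : faceMap Q' P' ⟨faceMap P' Q' F, hG⟩ = ∅ := faceMap_empty Q' P' _ h1
      rw [h2, hF]
    · obtain ⟨v, hFv, hmap⟩ := faceMap_spec P' Q' F hF
      have hQne : faceMap P' Q' F ≠ ∅ := by
        rw [hmap]
        intro hc
        exact hF (hFv.trans ((keyE' v).mpr hc))
      obtain ⟨w, hGw, hmap2⟩ := faceMap_spec Q' P' ⟨faceMap P' Q' F, hG⟩ hQne
      have hvw : Fv Q' v = Fv Q' w := by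
        rw [← hmap]; exact hGw
      have : Fv P' v = Fv P' w :=
        Set.Subset.antisymm ((key' v w).mpr hvw.subset) ((key' w v).mpr hvw.symm.subset)
      rw [hmap2, ← this, ← hFv]
  refine ⟨⟨fun F => ⟨faceMap P Q F, faceMap_isFace P Q F⟩,
      fun G => ⟨faceMap Q P G, faceMap_isFace Q P G⟩,
      fun F => Subtype.ext (inv P Q h F _),
      fun G => Subtype.ext (inv Q P h.symm G _)⟩, ?_⟩
  intro F G
  by_cases hF : (F : Set (Euc n)) = ∅
  · simp only [Equiv.coe_fn_mk]
    rw [faceMap_empty P Q F hF, hF]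
    simp
  · obtain ⟨v, hFv, hmapF⟩ := faceMap_spec P Q F hF
    by_cases hG : (G : Set (Euc n)) = ∅
    · simp only [Equiv.coe_fn_mk]
      rw [faceMap_empty P Q G hG, hG]
      constructor
      · intro hc
        exact absurd (Set.subset_empty_iff.mp hc) hF
      · intro hc
        rw [hmapF] at hc
        have : Fv Q v = ∅ := Set.subset_empty_iff.mp hc
        exact absurd (hFv.trans ((keyE v).mpr this)) hF
    · obtain ⟨w, hGw, hmapG⟩ := faceMap_spec P Q G hG
      simp only [Equiv.coe_fn_mk]
      rw [hmapF, hmapG, hFv, hGw]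
      exact key v w
end
end

section
/- Let A be the arrangement in ℝ^n with hyperplanes ⟨v_i,x⟩ = a_i for i = 1,…,m, where each v_i ≠ 0. For s ∈ sign(A) let F_s denote the topological closure of the cell {x ∈ ℝ^n : sign_A(x) = s}. Then for all s, w ∈ sign(A): F_s ⊆ F_w if and only if s ≤ w in the componentwise sign order. -/
open RealInnerProductSpace

noncomputable section

/-- The sign vector of a point `x` with respect to the arrangement with hyperplanes
`⟨v i, x⟩ = a i`. -/
def signVec {n m : ℕ} (v : Fin m → Euc n) (a : Fin m → ℝ) (x : Euc n) :
    Fin m → SignType :=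
  fun i => SignType.sign (⟪v i, x⟫ - a i)

/-- The sign order on sign vectors: `0 < +` and `0 < -`, `+` and `-` incomparable,
taken componentwise. -/
def SignLE {m : ℕ} (s w : Fin m → SignType) : Prop :=
  ∀ i, s i = 0 ∨ s i = w i

theorem face_closure_subset_iff_signLE {n m : ℕ} (hn : 1 ≤ n) (hm : 1 ≤ m)
    (v : Fin m → Euc n) (hv : ∀ i, v i ≠ 0) (a : Fin m → ℝ)
    (s w : Fin m → SignType)
    (hs : ∃ x : Euc n, signVec v a x = s) (hw : ∃ x : Euc n, signVec v a x = w) :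
    closure {x : Euc n | signVec v a x = s} ⊆ closure {x : Euc n | signVec v a x = w} ↔
      SignLE s w := by
  classical
  obtain ⟨p, hp⟩ := hs
  obtain ⟨q, hq⟩ := hw
  have hcont : ∀ i : Fin m, Continuous fun x : Euc n => ⟪v i, x⟫ - a i := fun i =>
    (Continuous.inner continuous_const continuous_id).sub continuous_const
  constructor
  · intro hsub i
    have hpcl : p ∈ closure {x : Euc n | signVec v a x = w} :=
      hsub (subset_closure hp)
    have hpi : SignType.sign (⟪v i, p⟫ - a i) = s i := congrFun hp i
    cases hwi : w i with
    | zero =>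
      have hcl : closure {x : Euc n | signVec v a x = w} ⊆ {x : Euc n | ⟪v i, x⟫ - a i = 0} := by
        apply closure_minimal
        · intro x hx
          have h1 : SignType.sign (⟪v i, x⟫ - a i) = w i := congrFun hx i
          rw [hwi] at h1
          exact sign_eq_zero_iff.mp h1
        · exact isClosed_eq (hcont i) continuous_const
      have h0 : ⟪v i, p⟫ - a i = 0 := hcl hpcl
      left; rw [← hpi, h0, sign_zero]
    | pos =>
      have hcl : closure {x : Euc n | signVec v a x = w} ⊆ {x : Euc n | 0 ≤ ⟪v i, x⟫ - a i} := by
        apply closure_minimal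
        · intro x hx
          have h1 : SignType.sign (⟪v i, x⟫ - a i) = w i := congrFun hx i
          rw [hwi] at h1
          exact le_of_lt (sign_eq_one_iff.mp h1)
        · exact isClosed_le continuous_const (hcont i)
      have h0 : 0 ≤ ⟪v i, p⟫ - a i := hcl hpcl
      rcases eq_or_lt_of_le h0 with h | h
      · left; rw [← hpi, ← h, sign_zero]
      · right; rw [← hpi]; exact sign_pos h
    | neg =>
      have hcl : closure {x : Euc n | signVec v a x = w} ⊆ {x : Euc n | ⟪v i, x⟫ - a i ≤ 0} := by
        apply closure_minimal
        · intro x hx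
          have h1 : SignType.sign (⟪v i, x⟫ - a i) = w i := congrFun hx i
          rw [hwi] at h1
          exact le_of_lt (sign_eq_neg_one_iff.mp h1)
        · exact isClosed_le (hcont i) continuous_const
      have h0 : ⟪v i, p⟫ - a i ≤ 0 := hcl hpcl
      rcases eq_or_lt_of_le h0 with h | h
      · left; rw [← hpi, h, sign_zero]
      · right; rw [← hpi]; exact sign_neg h
  · intro hle
    have key : {x : Euc n | signVec v a x = s} ⊆
        closure {x : Euc n | signVec v a x = w} := by
      intro x hx
      have htend : Filter.Tendsto (fun t : ℝ => x + t • (q - x)) (nhdsWithin 0 (Set.Ioi 0))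
          (nhds x) := by
        have h1 : Filter.Tendsto (fun t : ℝ => x + t • (q - x)) (nhds 0)
            (nhds (x + (0:ℝ) • (q - x))) := by
          exact (continuous_const.add (continuous_id.smul continuous_const)).tendsto 0
        simpa using h1.mono_left nhdsWithin_le_nhds
      refine mem_closure_of_tendsto htend ?_
      filter_upwards [Ioo_mem_nhdsGT_of_mem (by norm_num : (0:ℝ) ∈ Set.Ico 0 1)] with t ht
      show signVec v a (x + t • (q - x)) = w
      funext i
      have hxi : SignType.sign (⟪v i, x⟫ - a i) = s i := congrFun hx i
      have hqi : SignType.sign (⟪v i, q⟫ - a i) = w i := congrFun hq i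
      have hval : ⟪v i, x + t • (q - x)⟫ - a i
          = (1 - t) * (⟪v i, x⟫ - a i) + t * (⟪v i, q⟫ - a i) := by
        rw [inner_add_right, real_inner_smul_right, inner_sub_right]; ring
      show SignType.sign (⟪v i, x + t • (q - x)⟫ - a i) = w i
      rw [hval]
      rcases hle i with h0 | heq
      · have hxz : ⟪v i, x⟫ - a i = 0 := sign_eq_zero_iff.mp (by rw [hxi, h0])
        rw [hxz, mul_zero, zero_add, sign_mul, sign_pos ht.1, one_mul, hqi]
      · rw [heq] at hxi
        cases hwi : w i with
        | zero =>
          have hxz : ⟪v i, x⟫ - a i = 0 := sign_eq_zero_iff.mp (by rw [hxi, hwi]; rfl)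
          have hqz : ⟪v i, q⟫ - a i = 0 := sign_eq_zero_iff.mp (by rw [hqi, hwi]; rfl)
          rw [hxz, hqz, mul_zero, mul_zero, add_zero, sign_zero]
          rfl
        | pos =>
          have hxz : 0 < ⟪v i, x⟫ - a i := sign_eq_one_iff.mp (by rw [hxi, hwi]; rfl)
          have hqz : 0 < ⟪v i, q⟫ - a i := sign_eq_one_iff.mp (by rw [hqi, hwi]; rfl)
          have : 0 < (1 - t) * (⟪v i, x⟫ - a i) + t * (⟪v i, q⟫ - a i) :=
            add_pos (mul_pos (by linarith [ht.2]) hxz) (mul_pos ht.1 hqz)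
          rw [sign_pos this]; rfl
        | neg =>
          have hxz : ⟪v i, x⟫ - a i < 0 := sign_eq_neg_one_iff.mp (by rw [hxi, hwi]; rfl)
          have hqz : ⟪v i, q⟫ - a i < 0 := sign_eq_neg_one_iff.mp (by rw [hqi, hwi]; rfl)
          have : (1 - t) * (⟪v i, x⟫ - a i) + t * (⟪v i, q⟫ - a i) < 0 := by
            have h1 : (1 - t) * (⟪v i, x⟫ - a i) ≤ 0 :=
              mul_nonpos_of_nonneg_of_nonpos (by linarith [ht.2]) (le_of_lt hxz)
            have h2 : t * (⟪v i, q⟫ - a i) < 0 := mul_neg_of_pos_of_neg ht.1 hqz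
            linarith
          rw [sign_neg this]; rfl
    calc closure {x : Euc n | signVec v a x = s}
        ⊆ closure (closure {x : Euc n | signVec v a x = w}) := closure_mono key
      _ = closure {x : Euc n | signVec v a x = w} := closure_closure
end
end

section
/- Let A be the arrangement in ℝ^n with hyperplanes ⟨v_i,x⟩ = a_i (i = 1,…,m, each v_i ≠ 0) and A' the arrangement in ℝ^{n'} with hyperplanes ⟨v'_i,x⟩ = a'_i (i = 1,…,m, each v'_i ≠ 0). If A and A' are sign equivalent, i.e. sign(A) = sign(A'), then they are combinatorially equivalent: there exists a bijection Φ from the set of faces {closure of {x ∈ ℝ^n : sign_A(x) = s} : s ∈ sign(A)} onto the set of faces {closure of {x ∈ ℝ^{n'} : sign_{A'}(x) = s} : s ∈ sign(A')} such that F ⊆ G if and only if Φ(F) ⊆ Φ(G) for all faces F, G of A. -/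
open RealInnerProductSpace

noncomputable section

/-- The set of sign vectors of the arrangement. -/
def signSet' {n m : ℕ} (v : Fin m → Euc n) (a : Fin m → ℝ) : Set (Fin m → SignType) :=
  {s | ∃ x : Euc n, signVec v a x = s}

/-- A face of the arrangement: the closure of a nonempty cell. -/
def IsArrFace {n m : ℕ} (v : Fin m → Euc n) (a : Fin m → ℝ) (F : Set (Euc n)) : Prop :=
  ∃ s ∈ signSet' v a, F = closure {x : Euc n | signVec v a x = s}

/-- `s` conforms to `t`: componentwise, `s i` is zero or equals `t i`. -/
def Conf {m : ℕ} (s t : Fin m → SignType) : Prop := ∀ i, s i = 0 ∨ s i = t i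

lemma conf_trans {m : ℕ} {s t u : Fin m → SignType} (h1 : Conf s t) (h2 : Conf t u) :
    Conf s u := by
  intro i
  rcases h1 i with h | h
  · exact Or.inl h
  · rcases h2 i with h' | h'
    · exact Or.inl (h.trans h')
    · exact Or.inr (h.trans h')

lemma conf_antisymm {m : ℕ} {s t : Fin m → SignType} (h1 : Conf s t) (h2 : Conf t s) :
    s = t := by
  funext i
  rcases h1 i with h | h
  · rcases h2 i with h' | h'
    · rw [h, h']
    · rw [h']
  · exact h

/-- The "conformal closure" set of a sign vector. -/
def confSet {n m : ℕ} (v : Fin m → Euc n) (a : Fin m → ℝ) (s : Fin m → SignType) :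
    Set (Euc n) := {x | Conf (signVec v a x) s}

lemma isClosed_confSet {n m : ℕ} (v : Fin m → Euc n) (a : Fin m → ℝ)
    (s : Fin m → SignType) : IsClosed (confSet v a s) := by
  have heq : confSet v a s = ⋂ i, {x : Euc n | signVec v a x i = 0 ∨ signVec v a x i = s i} := by
    ext x; simp [confSet, Conf, Set.mem_iInter]
  rw [heq]
  refine isClosed_iInter fun i => ?_
  have hcont : Continuous fun x : Euc n => ⟪v i, x⟫ - a i :=
    ((innerSL ℝ (v i)).continuous).sub continuous_const
  rcases hsi : s i with _ | _ | _
  · -- s i = 0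
    have : {x : Euc n | signVec v a x i = 0 ∨ signVec v a x i = SignType.zero}
        = {x : Euc n | ⟪v i, x⟫ - a i = 0} := by
      ext x; simp [signVec, sign_eq_zero_iff, SignType.zero_eq_zero]
    rw [this]
    exact isClosed_eq hcont continuous_const
  · -- s i = neg
    have : {x : Euc n | signVec v a x i = 0 ∨ signVec v a x i = SignType.neg}
        = {x : Euc n | ⟪v i, x⟫ - a i ≤ 0} := by
      ext x
      simp only [Set.mem_setOf_eq, signVec]
      constructor
      · rintro (h | h)
        · exact le_of_eq (sign_eq_zero_iff.mp h)
        · exact le_of_lt (sign_eq_neg_one_iff.mp h)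
      · intro h
        rcases lt_or_eq_of_le h with h | h
        · exact Or.inr (sign_eq_neg_one_iff.mpr h)
        · exact Or.inl (sign_eq_zero_iff.mpr h)
    rw [this]
    exact isClosed_le hcont continuous_const
  · -- s i = pos
    have : {x : Euc n | signVec v a x i = 0 ∨ signVec v a x i = SignType.pos}
        = {x : Euc n | 0 ≤ ⟪v i, x⟫ - a i} := by
      ext x
      simp only [Set.mem_setOf_eq, signVec]
      constructor
      · rintro (h | h)
        · exact le_of_eq (sign_eq_zero_iff.mp h).symm
        · exact le_of_lt (sign_eq_one_iff.mp h)
      · intro h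
        rcases lt_or_eq_of_le h with h | h
        · exact Or.inr (sign_eq_one_iff.mpr h)
        · exact Or.inl (sign_eq_zero_iff.mpr h.symm)
    rw [this]
    exact isClosed_le continuous_const hcont

lemma closure_cell_eq {n m : ℕ} (v : Fin m → Euc n) (a : Fin m → ℝ)
    {s : Fin m → SignType} (hs : s ∈ signSet' v a) :
    closure {x : Euc n | signVec v a x = s} = confSet v a s := by
  apply Set.Subset.antisymm
  · refine closure_minimal ?_ (isClosed_confSet v a s)
    intro x hx
    intro i
    exact Or.inr (by rw [hx])
  · obtain ⟨y, hy⟩ := hs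
    intro x hx
    -- the sequence x + (1/(k+1)) • (y - x) lies in the cell and tends to x
    have hto : Filter.Tendsto (fun k : ℕ => x + (1 / ((k : ℝ) + 1)) • (y - x))
        Filter.atTop (nhds x) := by
      have hc : Filter.Tendsto (fun k : ℕ => (1 / ((k : ℝ) + 1))) Filter.atTop (nhds 0) :=
        tendsto_one_div_add_atTop_nhds_zero_nat
      have := (hc.smul_const (y - x)).const_add x
      simpa using this
    refine mem_closure_of_tendsto hto (Filter.Eventually.of_forall fun k => ?_)
    have ht0 : (0 : ℝ) < 1 / ((k : ℝ) + 1) := by positivity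
    have ht1 : 1 / ((k : ℝ) + 1) ≤ 1 := by
      rw [div_le_one (by positivity)]
      linarith [Nat.cast_nonneg (α := ℝ) k]
    set t : ℝ := 1 / ((k : ℝ) + 1) with htdef
    show signVec v a (x + t • (y - x)) = s
    funext i
    have hfval : ⟪v i, x + t • (y - x)⟫ - a i
        = (1 - t) * (⟪v i, x⟫ - a i) + t * (⟪v i, y⟫ - a i) := by
      rw [inner_add_right, inner_smul_right, inner_sub_right]
      ring
    have hyi : SignType.sign (⟪v i, y⟫ - a i) = s i := congrFun hy i
    have hxi : SignType.sign (⟪v i, x⟫ - a i) = 0 ∨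
        SignType.sign (⟪v i, x⟫ - a i) = s i := hx i
    show SignType.sign (⟪v i, x + t • (y - x)⟫ - a i) = s i
    rw [hfval]
    rcases hsi : s i with _ | _ | _
    · -- zero
      rw [hsi] at hyi hxi
      have hy0 : ⟪v i, y⟫ - a i = 0 := sign_eq_zero_iff.mp hyi
      have hx0 : ⟪v i, x⟫ - a i = 0 := by
        rcases hxi with h | h <;> exact sign_eq_zero_iff.mp h
      rw [hx0, hy0]
      simp
    · -- neg
      rw [hsi] at hyi hxi
      have hyneg : ⟪v i, y⟫ - a i < 0 := sign_eq_neg_one_iff.mp hyi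
      have hxle : ⟪v i, x⟫ - a i ≤ 0 := by
        rcases hxi with h | h
        · exact le_of_eq (sign_eq_zero_iff.mp h)
        · exact le_of_lt (sign_eq_neg_one_iff.mp h)
      have : (1 - t) * (⟪v i, x⟫ - a i) + t * (⟪v i, y⟫ - a i) < 0 := by
        have h1 : (1 - t) * (⟪v i, x⟫ - a i) ≤ 0 :=
          mul_nonpos_of_nonneg_of_nonpos (by linarith) hxle
        have h2 : t * (⟪v i, y⟫ - a i) < 0 := mul_neg_of_pos_of_neg ht0 hyneg
        linarith
      exact sign_eq_neg_one_iff.mpr this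
    · -- pos
      rw [hsi] at hyi hxi
      have hypos : 0 < ⟪v i, y⟫ - a i := sign_eq_one_iff.mp hyi
      have hxge : 0 ≤ ⟪v i, x⟫ - a i := by
        rcases hxi with h | h
        · exact le_of_eq (sign_eq_zero_iff.mp h).symm
        · exact le_of_lt (sign_eq_one_iff.mp h)
      have : 0 < (1 - t) * (⟪v i, x⟫ - a i) + t * (⟪v i, y⟫ - a i) := by
        have h1 : 0 ≤ (1 - t) * (⟪v i, x⟫ - a i) :=
          mul_nonneg (by linarith) hxge
        have h2 : 0 < t * (⟪v i, y⟫ - a i) := mul_pos ht0 hypos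
        linarith
      exact sign_eq_one_iff.mpr this

lemma closure_cell_subset_iff {n m : ℕ} (v : Fin m → Euc n) (a : Fin m → ℝ)
    {s t : Fin m → SignType} (hs : s ∈ signSet' v a) (ht : t ∈ signSet' v a) :
    closure {x : Euc n | signVec v a x = s} ⊆ closure {x : Euc n | signVec v a x = t}
      ↔ Conf s t := by
  rw [closure_cell_eq v a hs, closure_cell_eq v a ht]
  constructor
  · intro h
    obtain ⟨x, hx⟩ := hs
    have hxm : x ∈ confSet v a s := fun i => Or.inr (by rw [hx])
    have h2 := h hxm
    simp only [confSet, Set.mem_setOf_eq] at h2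
    rwa [hx] at h2
  · intro h x hx
    exact conf_trans hx h

/-- The map from sign vectors to faces is a bijection. -/
lemma faceEquiv_bij {n m : ℕ} (v : Fin m → Euc n) (a : Fin m → ℝ) :
    Function.Bijective (fun s : {s // s ∈ signSet' v a} =>
      (⟨closure {x : Euc n | signVec v a x = s.1}, ⟨s.1, s.2, rfl⟩⟩ :
        {F : Set (Euc n) // IsArrFace v a F})) := by
  constructor
  · rintro ⟨s, hs⟩ ⟨t, ht⟩ h
    have hval : closure {x : Euc n | signVec v a x = s}
        = closure {x : Euc n | signVec v a x = t} := congrArg Subtype.val h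
    have h1 : Conf s t := (closure_cell_subset_iff v a hs ht).mp hval.subset
    have h2 : Conf t s := (closure_cell_subset_iff v a ht hs).mp hval.symm.subset
    exact Subtype.ext (conf_antisymm h1 h2)
  · rintro ⟨F, s, hs, hF⟩
    exact ⟨⟨s, hs⟩, Subtype.ext hF.symm⟩

theorem combinatorially_equivalent_of_sign_equivalent {n n' m : ℕ}
    (hn : 1 ≤ n) (hn' : 1 ≤ n') (hm : 1 ≤ m)
    (v : Fin m → Euc n) (hv : ∀ i, v i ≠ 0) (a : Fin m → ℝ)
    (v' : Fin m → Euc n') (hv' : ∀ i, v' i ≠ 0) (a' : Fin m → ℝ)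
    (hsign : signSet' v a = signSet' v' a') :
    ∃ Φ : {F : Set (Euc n) // IsArrFace v a F} ≃ {G : Set (Euc n') // IsArrFace v' a' G},
      ∀ F G : {F : Set (Euc n) // IsArrFace v a F},
        (F : Set (Euc n)) ⊆ (G : Set (Euc n)) ↔
          (Φ F : Set (Euc n')) ⊆ (Φ G : Set (Euc n')) := by
  classical
  let eA := Equiv.ofBijective _ (faceEquiv_bij v a)
  let eB := Equiv.ofBijective _ (faceEquiv_bij v' a')
  let c : {s // s ∈ signSet' v a} ≃ {s // s ∈ signSet' v' a'} := Equiv.setCongr hsign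
  refine ⟨eA.symm.trans (c.trans eB), fun F G => ?_⟩
  set s := eA.symm F with hsdef
  set t := eA.symm G with htdef
  have hF : (F : Set (Euc n)) = closure {x : Euc n | signVec v a x = s.1} := by
    conv_lhs => rw [← eA.apply_symm_apply F]
    rfl
  have hG : (G : Set (Euc n)) = closure {x : Euc n | signVec v a x = t.1} := by
    conv_lhs => rw [← eA.apply_symm_apply G]
    rfl
  have hs' : s.1 ∈ signSet' v' a' := hsign ▸ s.2
  have ht' : t.1 ∈ signSet' v' a' := hsign ▸ t.2
  have hΦF : ((eA.symm.trans (c.trans eB)) F : Set (Euc n'))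
      = closure {x : Euc n' | signVec v' a' x = s.1} := rfl
  have hΦG : ((eA.symm.trans (c.trans eB)) G : Set (Euc n'))
      = closure {x : Euc n' | signVec v' a' x = t.1} := rfl
  rw [hF, hG, hΦF, hΦG, closure_cell_subset_iff v a s.2 t.2,
    closure_cell_subset_iff v' a' hs' ht']
end
end
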